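/- arXiv:1408.3590 — 4 statements merged into one kernel-verified Lean document; each statement's English description precedes it below -/
import Mathlib

section
/- For a kernel W and a partition P of [0,1] into t classes, the cut-P-norm of W equals the maximum over all sign matrices A ∈ {-1,+1}^{t×t} of the cut norm of W^A, where W^A(x,y) = A_{j,l} W(x,y) for x ∈ P_j, y ∈ P_l. -/
open MeasureTheory Set

noncomputable section

abbrev I01 : Set ℝ := Set.Icc 0 1

def IsKernel (W : ℝ → ℝ → ℝ) : Prop :=
  Measurable (Function.uncurry W) ∧ ∃ C, ∀ x y, |W x y| ≤ C

def IsPartition {ι : Type*} [Fintype ι] (P : ι → Set ℝ) : Prop :=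
  (∀ i, MeasurableSet (P i)) ∧ (∀ i, P i ⊆ I01) ∧
  (Pairwise fun i j => Disjoint (P i) (P j)) ∧ (⋃ i, P i) = I01

def cutNorm (W : ℝ → ℝ → ℝ) : ℝ :=
  sSup { r | ∃ S T : Set ℝ, MeasurableSet S ∧ MeasurableSet T ∧ S ⊆ I01 ∧ T ⊆ I01 ∧
    r = |∫ x in S, ∫ y in T, W x y| }

def cutPNorm {ι : Type*} [Fintype ι] (P : ι → Set ℝ) (W : ℝ → ℝ → ℝ) : ℝ :=
  sSup { r | ∃ S T : ι → Set ℝ,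
    (∀ i, MeasurableSet (S i) ∧ MeasurableSet (T i) ∧ S i ⊆ P i ∧ T i ⊆ P i) ∧
    r = ∑ i, ∑ j, |∫ x in S i, ∫ y in T j, W x y| }

def l1Norm (W : ℝ → ℝ → ℝ) : ℝ := ∫ x in I01, ∫ y in I01, |W x y|

def l2sq (W : ℝ → ℝ → ℝ) : ℝ := ∫ x in I01, ∫ y in I01, (W x y)^2

def avgP {ι : Type*} [Fintype ι] (P : ι → Set ℝ) (W : ℝ → ℝ → ℝ) : ℝ → ℝ → ℝ :=
  fun x y => ∑ i, ∑ j, (P i).indicator (fun _ => (1:ℝ)) x * (P j).indicator (fun _ => (1:ℝ)) y *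
    ((∫ u in P i, ∫ v in P j, W u v) / (volume (P i)).toReal / (volume (P j)).toReal)

/-!
Splitting `S, T ⊆ [0,1]` along `P` gives
`∫_{S×T} W^A = ∑_{j,l} A_{jl} ∫_{(S ∩ P_j)×(T ∩ P_l)} W`, so for `|A_{jl}| ≤ 1` every value
`|∫_{S×T} W^A|` is bounded by a sum from the definition of `‖W‖_{□P}`. Conversely, for a
family `S_i, T_i ⊆ P_i`, taking `S = ⋃ S_i`, `T = ⋃ T_i` and `A_{jl}` the sign of
`∫_{S_j×T_l} W` realizes `∑_{j,l} |∫_{S_j×T_l} W|` as `∫_{S×T} W^A`. Since there are finitely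
many sign matrices, the supremum over them is attained.
-/

/-- The kernel `W^A` of the statement: `A j l • W` on `P j × P l`. -/
def signTwist {ι : Type*} [Fintype ι] (P : ι → Set ℝ) (A : ι → ι → ℝ) (W : ℝ → ℝ → ℝ) :
    ℝ → ℝ → ℝ :=
  fun x y => (∑ j, ∑ l, (P j).indicator (fun _ => (1:ℝ)) x *
    (P l).indicator (fun _ => (1:ℝ)) y * A j l) * W x y

lemma iUnion_inter_eq_of_pairwise_disjoint {α ι : Type*} {P S : ι → Set α} (hSP : ∀ i, S i ⊆ P i)
    (hP : Pairwise fun i j => Disjoint (P i) (P j)) (j : ι) : (⋃ i, S i) ∩ P j = S j := by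
  refine subset_antisymm ?_ (subset_inter (subset_iUnion S j) (hSP j))
  rintro x ⟨hx, hxj⟩
  obtain ⟨i, hxi⟩ := mem_iUnion.mp hx
  obtain rfl | hij := eq_or_ne i j
  · exact hxi
  · exact absurd hxj (disjoint_left.mp (hP hij) (hSP i hxi))

section UnitInterval

variable {S T : Set ℝ} {C : ℝ}

lemma volume_lt_top_of_subset_I01 (hS : S ⊆ I01) : volume S < ⊤ :=
  (measure_mono hS).trans_lt measure_Icc_lt_top

lemma volume_real_le_one_of_subset_I01 (hS : S ⊆ I01) : volume.real S ≤ 1 := by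
  simpa using measureReal_mono hS (volume_lt_top_of_subset_I01 subset_rfl).ne

lemma integrableOn_of_subset_I01 {f : ℝ → ℝ} (hf : AEStronglyMeasurable f)
    (hbound : ∀ x, |f x| ≤ C) (hS : S ⊆ I01) : IntegrableOn f S :=
  Measure.integrableOn_of_bounded (volume_lt_top_of_subset_I01 hS).ne hf (ae_of_all _ hbound)

lemma abs_setIntegral_le_of_subset_I01 {f : ℝ → ℝ} (hbound : ∀ x, |f x| ≤ C)
    (hS : S ⊆ I01) : |∫ x in S, f x| ≤ C :=
  calc |∫ x in S, f x| ≤ C * volume.real S := by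
        simpa only [Real.norm_eq_abs] using norm_setIntegral_le_of_norm_le_const
          (volume_lt_top_of_subset_I01 hS) (f := f) fun x _ => (Real.norm_eq_abs (f x)).symm ▸ hbound x
    _ ≤ C := mul_le_of_le_one_right ((abs_nonneg _).trans (hbound 0))
        (volume_real_le_one_of_subset_I01 hS)

lemma abs_setIntegral_setIntegral_le_of_subset_I01 {W : ℝ → ℝ → ℝ}
    (hbound : ∀ x y, |W x y| ≤ C) (hS : S ⊆ I01) (hT : T ⊆ I01) :
    |∫ x in S, ∫ y in T, W x y| ≤ C :=
  abs_setIntegral_le_of_subset_I01 (fun x => abs_setIntegral_le_of_subset_I01 (hbound x) hT) hS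

end UnitInterval

section Indicator

variable {α ι : Type*} [Fintype ι] {P : ι → Set α}

lemma sum_indicator_one_mul_mul (P : ι → Set α) (c : ι → ℝ) (g : α → ℝ) (y : α) :
    (∑ i, (P i).indicator (fun _ => (1:ℝ)) y * c i) * g y = ∑ i, c i * (P i).indicator g y := by
  rw [Finset.sum_mul]
  refine Finset.sum_congr rfl fun i _ => ?_
  by_cases hy : y ∈ P i <;> simp [hy, mul_comm]

lemma MeasureTheory.IntegrableOn.sum_indicator_one_mul [MeasurableSpace α] {μ : Measure α} (hP : ∀ i, MeasurableSet (P i)) {g : α → ℝ} {T : Set α}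
    (hg : IntegrableOn g T μ) (c : ι → ℝ) :
    IntegrableOn (fun y => (∑ i, (P i).indicator (fun _ => (1:ℝ)) y * c i) * g y) T μ := by
  simp_rw [sum_indicator_one_mul_mul]
  exact integrable_finsetSum _ fun i _ => (hg.indicator (hP i)).const_mul (c i)

lemma setIntegral_sum_indicator_one_mul [MeasurableSpace α] {μ : Measure α} (hP : ∀ i, MeasurableSet (P i)) {g : α → ℝ}
    {T : Set α} (hg : IntegrableOn g T μ) (c : ι → ℝ) :
    ∫ y in T, (∑ i, (P i).indicator (fun _ => (1:ℝ)) y * c i) * g y ∂μ =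
      ∑ i, c i * ∫ y in T ∩ P i, g y ∂μ := by
  simp_rw [sum_indicator_one_mul_mul]
  rw [integral_finsetSum _ fun i _ => (hg.indicator (hP i)).const_mul (c i)]
  simp_rw [integral_const_mul, setIntegral_indicator (hP _)]

end Indicator

section CutNorm

variable {W : ℝ → ℝ → ℝ} {c : ℝ}

lemma cutNorm_le (h : ∀ S T, MeasurableSet S → MeasurableSet T → S ⊆ I01 → T ⊆ I01 →
    |∫ x in S, ∫ y in T, W x y| ≤ c) : cutNorm W ≤ c :=
  csSup_le ⟨_, ∅, ∅, .empty, .empty, empty_subset _, empty_subset _, rfl⟩ <| by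
    rintro r ⟨S, T, hSm, hTm, hS, hT, rfl⟩
    exact h S T hSm hTm hS hT

lemma abs_setIntegral_setIntegral_le_cutNorm (h : ∀ S T, MeasurableSet S → MeasurableSet T →
    S ⊆ I01 → T ⊆ I01 → |∫ x in S, ∫ y in T, W x y| ≤ c) {S T : Set ℝ} (hSm : MeasurableSet S)
    (hTm : MeasurableSet T) (hS : S ⊆ I01) (hT : T ⊆ I01) :
    |∫ x in S, ∫ y in T, W x y| ≤ cutNorm W :=
  le_csSup ⟨c, by rintro r ⟨S, T, hSm, hTm, hS, hT, rfl⟩; exact h S T hSm hTm hS hT⟩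
    ⟨S, T, hSm, hTm, hS, hT, rfl⟩

variable {ι : Type*} [Fintype ι] {P : ι → Set ℝ}

lemma cutPNorm_le (h : ∀ S T : ι → Set ℝ,
    (∀ i, MeasurableSet (S i) ∧ MeasurableSet (T i) ∧ S i ⊆ P i ∧ T i ⊆ P i) →
    ∑ i, ∑ j, |∫ x in S i, ∫ y in T j, W x y| ≤ c) : cutPNorm P W ≤ c :=
  csSup_le ⟨0, fun _ => ∅, fun _ => ∅, fun _ => ⟨.empty, .empty, empty_subset _, empty_subset _⟩,
    by simp⟩ <| by
    rintro r ⟨S, T, hST, rfl⟩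
    exact h S T hST

lemma sum_abs_setIntegral_setIntegral_le_cutPNorm {C : ℝ} (hbound : ∀ x y, |W x y| ≤ C)
    (hPs : ∀ i, P i ⊆ I01) {S T : ι → Set ℝ}
    (hST : ∀ i, MeasurableSet (S i) ∧ MeasurableSet (T i) ∧ S i ⊆ P i ∧ T i ⊆ P i) :
    ∑ i, ∑ j, |∫ x in S i, ∫ y in T j, W x y| ≤ cutPNorm P W := by
  refine le_csSup ⟨Fintype.card ι * (Fintype.card ι * C), ?_⟩ ⟨S, T, hST, rfl⟩
  rintro r ⟨S, T, hST, rfl⟩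
  calc ∑ i, ∑ j, |∫ x in S i, ∫ y in T j, W x y| ≤ ∑ _i : ι, ∑ _j : ι, C :=
        Finset.sum_le_sum fun i _ => Finset.sum_le_sum fun j _ =>
          abs_setIntegral_setIntegral_le_of_subset_I01 hbound ((hST i).2.2.1.trans (hPs i))
            ((hST j).2.2.2.trans (hPs j))
    _ = Fintype.card ι * (Fintype.card ι * C) := by simp

end CutNorm

section SignTwist

variable {ι : Type*} [Fintype ι] {P : ι → Set ℝ} {W : ℝ → ℝ → ℝ} {C : ℝ}

lemma signTwist_eq_sum_indicator_one_mul (P : ι → Set ℝ) (A : ι → ι → ℝ) (W : ℝ → ℝ → ℝ)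
    (x y : ℝ) : signTwist P A W x y =
      (∑ l, (P l).indicator (fun _ => (1:ℝ)) y *
        ∑ j, (P j).indicator (fun _ => (1:ℝ)) x * A j l) * W x y := by
  simp only [signTwist, Finset.mul_sum]
  rw [Finset.sum_comm]
  congr 1
  refine Finset.sum_congr rfl fun l _ => Finset.sum_congr rfl fun j _ => ?_
  ring

lemma setIntegral_setIntegral_signTwist (hWm : Measurable (Function.uncurry W))
    (hbound : ∀ x y, |W x y| ≤ C) (hPm : ∀ i, MeasurableSet (P i)) (A : ι → ι → ℝ)
    {S T : Set ℝ} (hS : S ⊆ I01) (hT : T ⊆ I01) :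
    ∫ x in S, ∫ y in T, signTwist P A W x y =
      ∑ j, ∑ l, A j l * ∫ x in S ∩ P j, ∫ y in T ∩ P l, W x y := by
  have hinner : ∀ x, ∫ y in T, signTwist P A W x y =
      ∑ l, (∑ j, (P j).indicator (fun _ => (1:ℝ)) x * A j l) * ∫ y in T ∩ P l, W x y := by
    intro x
    simp_rw [signTwist_eq_sum_indicator_one_mul]
    exact setIntegral_sum_indicator_one_mul hPm
      (integrableOn_of_subset_I01 hWm.of_uncurry_left.aestronglyMeasurable (hbound x) hT) _
  have hG : ∀ l, IntegrableOn (fun x => ∫ y in T ∩ P l, W x y) S := fun l =>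
    integrableOn_of_subset_I01 hWm.stronglyMeasurable.integral_prod_right'.aestronglyMeasurable
      (fun x => abs_setIntegral_le_of_subset_I01 (hbound x) (inter_subset_left.trans hT)) hS
  simp_rw [hinner]
  rw [integral_finsetSum _ fun l _ => (hG l).sum_indicator_one_mul hPm _, Finset.sum_comm]
  simp_rw [setIntegral_sum_indicator_one_mul hPm (hG _)]

lemma abs_setIntegral_setIntegral_signTwist_le_cutPNorm (hWm : Measurable (Function.uncurry W))
    (hbound : ∀ x y, |W x y| ≤ C) (hPm : ∀ i, MeasurableSet (P i)) (hPs : ∀ i, P i ⊆ I01)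
    {A : ι → ι → ℝ} (hA : ∀ j l, |A j l| ≤ 1) {S T : Set ℝ} (hSm : MeasurableSet S)
    (hTm : MeasurableSet T) (hS : S ⊆ I01) (hT : T ⊆ I01) :
    |∫ x in S, ∫ y in T, signTwist P A W x y| ≤ cutPNorm P W := by
  rw [setIntegral_setIntegral_signTwist hWm hbound hPm A hS hT]
  calc |∑ j, ∑ l, A j l * ∫ x in S ∩ P j, ∫ y in T ∩ P l, W x y|
      ≤ ∑ j, ∑ l, |∫ x in S ∩ P j, ∫ y in T ∩ P l, W x y| :=
        (Finset.abs_sum_le_sum_abs _ _).trans <| Finset.sum_le_sum fun j _ =>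
          (Finset.abs_sum_le_sum_abs _ _).trans <| Finset.sum_le_sum fun l _ => by
            rw [abs_mul]
            exact mul_le_of_le_one_left (abs_nonneg _) (hA j l)
    _ ≤ cutPNorm P W := sum_abs_setIntegral_setIntegral_le_cutPNorm hbound hPs fun i =>
        ⟨hSm.inter (hPm i), hTm.inter (hPm i), inter_subset_right, inter_subset_right⟩

lemma cutNorm_signTwist_le_cutPNorm (hWm : Measurable (Function.uncurry W))
    (hbound : ∀ x y, |W x y| ≤ C) (hPm : ∀ i, MeasurableSet (P i)) (hPs : ∀ i, P i ⊆ I01)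
    {A : ι → ι → ℝ} (hA : ∀ j l, |A j l| ≤ 1) : cutNorm (signTwist P A W) ≤ cutPNorm P W :=
  cutNorm_le fun _ _ hSm hTm hS hT =>
    abs_setIntegral_setIntegral_signTwist_le_cutPNorm hWm hbound hPm hPs hA hSm hTm hS hT

lemma exists_sign_sum_abs_le_cutNorm_signTwist (hWm : Measurable (Function.uncurry W))
    (hbound : ∀ x y, |W x y| ≤ C) (hPm : ∀ i, MeasurableSet (P i)) (hPs : ∀ i, P i ⊆ I01)
    (hPd : Pairwise fun i j => Disjoint (P i) (P j)) {S T : ι → Set ℝ}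
    (hST : ∀ i, MeasurableSet (S i) ∧ MeasurableSet (T i) ∧ S i ⊆ P i ∧ T i ⊆ P i) :
    ∃ A : ι → ι → ℝ, (∀ j l, A j l = 1 ∨ A j l = -1) ∧
      ∑ j, ∑ l, |∫ x in S j, ∫ y in T l, W x y| ≤ cutNorm (signTwist P A W) := by
  set A : ι → ι → ℝ := fun j l => if 0 ≤ ∫ x in S j, ∫ y in T l, W x y then 1 else -1
  have hA : ∀ j l, A j l = 1 ∨ A j l = -1 := fun j l => by
    by_cases h : 0 ≤ ∫ x in S j, ∫ y in T l, W x y <;> simp [A, h]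
  have hSU : MeasurableSet (⋃ i, S i) := .iUnion fun i => (hST i).1
  have hTU : MeasurableSet (⋃ i, T i) := .iUnion fun i => (hST i).2.1
  have hSU01 : (⋃ i, S i) ⊆ I01 := iUnion_subset fun i => (hST i).2.2.1.trans (hPs i)
  have hTU01 : (⋃ i, T i) ⊆ I01 := iUnion_subset fun i => (hST i).2.2.2.trans (hPs i)
  refine ⟨A, hA, ?_⟩
  calc ∑ j, ∑ l, |∫ x in S j, ∫ y in T l, W x y|
      = ∑ j, ∑ l, A j l * ∫ x in S j, ∫ y in T l, W x y :=
        Finset.sum_congr rfl fun j _ => Finset.sum_congr rfl fun l _ => by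
          by_cases h : 0 ≤ ∫ x in S j, ∫ y in T l, W x y
          · simp [A, h, abs_of_nonneg h]
          · simp [A, h, abs_of_neg (not_le.mp h)]
    _ = ∫ x in ⋃ i, S i, ∫ y in ⋃ i, T i, signTwist P A W x y := by
        rw [setIntegral_setIntegral_signTwist hWm hbound hPm A hSU01 hTU01]
        simp_rw [iUnion_inter_eq_of_pairwise_disjoint (fun i => (hST i).2.2.1) hPd,
          iUnion_inter_eq_of_pairwise_disjoint (fun i => (hST i).2.2.2) hPd]
    _ ≤ |∫ x in ⋃ i, S i, ∫ y in ⋃ i, T i, signTwist P A W x y| := le_abs_self _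
    _ ≤ cutNorm (signTwist P A W) :=
        abs_setIntegral_setIntegral_le_cutNorm (fun _ _ hSm hTm hS hT =>
          abs_setIntegral_setIntegral_signTwist_le_cutPNorm hWm hbound hPm hPs
            (fun j l => by rcases hA j l with h | h <;> simp [h]) hSm hTm hS hT)
          hSU hTU hSU01 hTU01

end SignTwist

lemma finite_setOf_forall_eq_one_or_eq_neg_one (ι κ : Type*) [Finite ι] [Finite κ] :
    {A : ι → κ → ℝ | ∀ j l, A j l = 1 ∨ A j l = -1}.Finite := by
  refine (Set.Finite.pi fun _ => Set.Finite.pi fun _ => (toFinite {1, -1})).subset ?_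
  intro A hA
  simpa [Set.mem_pi] using hA

theorem cutPNorm_eq_max_sign_cutNorm {t : ℕ} (W : ℝ → ℝ → ℝ) (hW : IsKernel W)
    (P : Fin t → Set ℝ) (hP : IsPartition P) :
    IsGreatest { r | ∃ A : Fin t → Fin t → ℝ, (∀ j l, A j l = 1 ∨ A j l = -1) ∧
      r = cutNorm (fun x y => (∑ j, ∑ l, (P j).indicator (fun _ => (1:ℝ)) x *
            (P l).indicator (fun _ => (1:ℝ)) y * A j l) * W x y) }
      (cutPNorm P W) := by
  obtain ⟨hWm, C, hbound⟩ := hW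
  obtain ⟨hPm, hPs, hPd, -⟩ := hP
  change IsGreatest {r | ∃ A, (∀ j l, A j l = 1 ∨ A j l = -1) ∧ r = cutNorm (signTwist P A W)} _
  have hle : ∀ A : Fin t → Fin t → ℝ, (∀ j l, A j l = 1 ∨ A j l = -1) →
      cutNorm (signTwist P A W) ≤ cutPNorm P W := fun A hA =>
    cutNorm_signTwist_le_cutPNorm hWm hbound hPm hPs fun j l => by
      rcases hA j l with h | h <;> simp [h]
  obtain ⟨A₀, hA₀, hmax⟩ := Set.exists_max_image _ (fun A => cutNorm (signTwist P A W))
    (finite_setOf_forall_eq_one_or_eq_neg_one (Fin t) (Fin t)) ⟨fun _ _ => 1, fun _ _ => .inl rfl⟩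
  refine ⟨⟨A₀, hA₀, le_antisymm ?_ (hle A₀ hA₀)⟩, ?_⟩
  · refine cutPNorm_le fun S T hST => ?_
    obtain ⟨A, hA, hsum⟩ :=
      exists_sign_sum_abs_le_cutNorm_signTwist hWm hbound hPm hPs hPd hST
    exact hsum.trans (hmax A hA)
  · rintro r ⟨A, hA, rfl⟩
    exact hle A hA
end
end

section
/- For any kernel W : [0,1]² → ℝ with |W| ≤ 1 and any two measurable partitions P = (P₁,…,P_l) and S = (S₁,…,S_l) of [0,1] into the same number of parts, ‖W_P − W_S‖₁ ≤ 7 Σ_{i=1}^l λ(P_i △ S_i), where λ is Lebesgue measure and △ is symmetric difference. -/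
open MeasureTheory Set

noncomputable section

/-! Write `r i = λ(P i ∆ S i) / max (λ P i) (λ S i)`. For a function bounded by `1`, the averages
over `A` and over `B` differ by at most `2 λ(A ∆ B) / max (λ A) (λ B)`; applying this once in each
variable, `W_P` and `W_S` differ by at most `2 (r i + r j)` on `(P i ∩ S i) × (P j ∩ S j)`.
A point of `[0,1]` outside every `P i ∩ S i` lies in `P i \ S i` and in `S j \ P j` for some
`i ≠ j`, i.e. in two of the sets `P i ∆ S i`, and there `|W_P - W_S| ≤ 2` anyway. So
`|W_P - W_S| (x, y) ≤ h x + h y` with `h = ∑ i, (2 r i • 𝟙 (P i ∩ S i) + 𝟙 (P i ∆ S i))`, and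
`∫ h ≤ 3 ∑ i, λ(P i ∆ S i)` because `λ(P i ∩ S i) r i ≤ λ(P i ∆ S i)`. -/

open Function
open scoped symmDiff ENNReal

section SetAverage

variable {α : Type*} [MeasurableSpace α] {μ : Measure α} {f : α → ℝ} {A B : Set α} {C : ℝ}

def symmDiffRatio (μ : Measure α) (A B : Set α) : ℝ :=
  μ.real (A ∆ B) / max (μ.real A) (μ.real B)

lemma symmDiffRatio_nonneg : 0 ≤ symmDiffRatio μ A B := by
  unfold symmDiffRatio; positivity

lemma measureReal_inter_mul_symmDiffRatio_le (hA : μ A ≠ ∞) :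
    μ.real (A ∩ B) * symmDiffRatio μ A B ≤ μ.real (A ∆ B) := by
  have hmax : μ.real (A ∩ B) ≤ max (μ.real A) (μ.real B) :=
    (measureReal_mono inter_subset_left hA).trans (le_max_left _ _)
  rw [symmDiffRatio, ← mul_div_assoc]
  rcases (measureReal_nonneg.trans hmax).eq_or_lt with hzero | hpos
  · rw [← hzero, div_zero]
    exact measureReal_nonneg
  · rw [div_le_iff₀ hpos, mul_comm]
    exact mul_le_mul_of_nonneg_left hmax measureReal_nonneg

lemma abs_setAverage_le (hC : 0 ≤ C) (hA : μ A ≠ ∞) (hf : ∀ x ∈ A, |f x| ≤ C) :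
    |⨍ x in A, f x ∂μ| ≤ C := by
  rw [setAverage_eq, smul_eq_mul, abs_mul, abs_inv, abs_of_nonneg measureReal_nonneg]
  rcases measureReal_nonneg.lt_or_eq with hpos | hzero
  · rw [inv_mul_le_iff₀ hpos, mul_comm]
    exact norm_setIntegral_le_of_norm_le_const (f := f) hA.lt_top hf
  · simp [← hzero, hC]

lemma abs_setIntegral_sub_setIntegral_le (hfA : IntegrableOn f A μ) (hfB : IntegrableOn f B μ)
    (hA : MeasurableSet A) (hB : MeasurableSet B) (hA' : μ A ≠ ∞) (hB' : μ B ≠ ∞)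
    (hfC : ∀ x, |f x| ≤ C) :
    |∫ x in A, f x ∂μ - ∫ x in B, f x ∂μ| ≤ C * μ.real (A ∆ B) := by
  rw [← integral_inter_add_sdiff hB hfA, ← integral_inter_add_sdiff hA hfB, inter_comm B A,
    add_sub_add_left_eq_sub, measureReal_symmDiff_eq hA hB, mul_add]
  have hAB : μ (A \ B) < ∞ := (measure_mono sdiff_subset).trans_lt hA'.lt_top
  have hBA : μ (B \ A) < ∞ := (measure_mono sdiff_subset).trans_lt hB'.lt_top
  exact (abs_sub _ _).trans (add_le_add
    (norm_setIntegral_le_of_norm_le_const (f := f) hAB fun x _ => (hfC x : ‖f x‖ ≤ C))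
    (norm_setIntegral_le_of_norm_le_const (f := f) hBA fun x _ => (hfC x : ‖f x‖ ≤ C)))

lemma measureReal_mul_abs_setAverage_sub_le (hf : AEStronglyMeasurable f μ) (hC : 0 ≤ C)
    (hfC : ∀ x, |f x| ≤ C) (hA : MeasurableSet A) (hB : MeasurableSet B) (hA' : μ A ≠ ∞)
    (hB' : μ B ≠ ∞) :
    μ.real A * |⨍ x in A, f x ∂μ - ⨍ x in B, f x ∂μ| ≤ 2 * C * μ.real (A ∆ B) := by
  have hfA : IntegrableOn f A μ :=
    Measure.integrableOn_of_bounded hA' hf (ae_of_all _ (hfC : ∀ x, ‖f x‖ ≤ C))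
  have hfB : IntegrableOn f B μ :=
    Measure.integrableOn_of_bounded hB' hf (ae_of_all _ (hfC : ∀ x, ‖f x‖ ≤ C))
  have hIA : μ.real A * ⨍ x in A, f x ∂μ = ∫ x in A, f x ∂μ := measure_smul_setAverage f hA'
  have hIB : μ.real B * ⨍ x in B, f x ∂μ = ∫ x in B, f x ∂μ := measure_smul_setAverage f hB'
  calc μ.real A * |⨍ x in A, f x ∂μ - ⨍ x in B, f x ∂μ|
      = |μ.real A * (⨍ x in A, f x ∂μ - ⨍ x in B, f x ∂μ)| := by
        rw [abs_mul, abs_of_nonneg measureReal_nonneg]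
    _ = |(∫ x in A, f x ∂μ - ∫ x in B, f x ∂μ) + (μ.real B - μ.real A) * ⨍ x in B, f x ∂μ| := by
        rw [← hIA, ← hIB]
        ring_nf
    _ ≤ |∫ x in A, f x ∂μ - ∫ x in B, f x ∂μ| + |μ.real B - μ.real A| * |⨍ x in B, f x ∂μ| :=
        (abs_add_le _ _).trans_eq (by rw [abs_mul])
    _ ≤ C * μ.real (A ∆ B) + μ.real (A ∆ B) * C := by
        gcongr
        · exact abs_setIntegral_sub_setIntegral_le hfA hfB hA hB hA' hB' hfC
        · rw [symmDiff_comm]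
          exact abs_measureReal_sub_le_measureReal_symmDiff' hB.nullMeasurableSet
            hA.nullMeasurableSet hB' hA'
        · exact abs_setAverage_le hC hB' fun x _ => hfC x
    _ = 2 * C * μ.real (A ∆ B) := by ring

lemma abs_setAverage_sub_setAverage_le (hf : AEStronglyMeasurable f μ) (hC : 0 ≤ C)
    (hfC : ∀ x, |f x| ≤ C) (hA : MeasurableSet A) (hB : MeasurableSet B) (hA' : μ A ≠ ∞)
    (hB' : μ B ≠ ∞) :
    |⨍ x in A, f x ∂μ - ⨍ x in B, f x ∂μ| ≤ 2 * C * symmDiffRatio μ A B := by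
  have hmax : max (μ.real A) (μ.real B) * |⨍ x in A, f x ∂μ - ⨍ x in B, f x ∂μ| ≤
      2 * C * μ.real (A ∆ B) := by
    rw [max_mul_of_nonneg _ _ (abs_nonneg _)]
    refine max_le (measureReal_mul_abs_setAverage_sub_le hf hC hfC hA hB hA' hB') ?_
    rw [abs_sub_comm, symmDiff_comm]
    exact measureReal_mul_abs_setAverage_sub_le hf hC hfC hB hA hB' hA'
  rcases (measureReal_nonneg.trans (le_max_left (μ.real A) (μ.real B))).eq_or_lt with hzero | hpos
  · have hA0 : μ.real A = 0 := le_antisymm (hzero ▸ le_max_left _ _) measureReal_nonneg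
    have hB0 : μ.real B = 0 := le_antisymm (hzero ▸ le_max_right _ _) measureReal_nonneg
    simp only [setAverage_eq, hA0, hB0, inv_zero, zero_smul, sub_zero, abs_zero]
    exact mul_nonneg (by positivity) symmDiffRatio_nonneg
  · rw [symmDiffRatio, ← mul_div_assoc, le_div_iff₀ hpos, mul_comm]
    exact hmax

end SetAverage

section IteratedAverage

variable {α β : Type*} [MeasurableSpace α] [MeasurableSpace β] {μ : Measure α} {ν : Measure β}
  [SFinite ν] {W : α → β → ℝ} {A B : Set α} {A' B' : Set β} {C : ℝ}

lemma measurable_setAverage_right (hW : Measurable (uncurry W)) (A' : Set β) :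
    Measurable fun x => ⨍ y in A', W x y ∂ν := by
  simp only [setAverage_eq]
  exact (hW.stronglyMeasurable.integral_prod_right (ν := ν.restrict A')).measurable.const_mul _

lemma abs_iteratedSetAverage_sub_le (hW : Measurable (uncurry W)) (hC : 0 ≤ C)
    (hWC : ∀ x y, |W x y| ≤ C) (hA : MeasurableSet A) (hB : MeasurableSet B)
    (hA' : MeasurableSet A') (hB' : MeasurableSet B') (hAfin : μ A ≠ ∞) (hBfin : μ B ≠ ∞)
    (hAfin' : ν A' ≠ ∞) (hBfin' : ν B' ≠ ∞) :
    |⨍ x in A, ⨍ y in A', W x y ∂ν ∂μ - ⨍ x in B, ⨍ y in B', W x y ∂ν ∂μ| ≤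
      2 * C * (symmDiffRatio μ A B + symmDiffRatio ν A' B') := by
  set F := fun x => ⨍ y in A', W x y ∂ν
  set G := fun x => ⨍ y in B', W x y ∂ν
  have hFm : Measurable F := measurable_setAverage_right hW A'
  have hGm : Measurable G := measurable_setAverage_right hW B'
  have hFC : ∀ x, |F x| ≤ C := fun x => abs_setAverage_le hC hAfin' fun y _ => hWC x y
  have hGC : ∀ x, |G x| ≤ C := fun x => abs_setAverage_le hC hBfin' fun y _ => hWC x y
  have hFG : ∀ x, |F x - G x| ≤ 2 * C * symmDiffRatio ν A' B' := fun x =>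
    abs_setAverage_sub_setAverage_le hW.of_uncurry_left.aestronglyMeasurable hC (hWC x)
      hA' hB' hAfin' hBfin'
  have hFB : IntegrableOn F B μ :=
    Measure.integrableOn_of_bounded hBfin hFm.aestronglyMeasurable
      (ae_of_all _ (hFC : ∀ x, ‖F x‖ ≤ C))
  have hGB : IntegrableOn G B μ :=
    Measure.integrableOn_of_bounded hBfin hGm.aestronglyMeasurable
      (ae_of_all _ (hGC : ∀ x, ‖G x‖ ≤ C))
  have hsub : ⨍ x in B, F x ∂μ - ⨍ x in B, G x ∂μ = ⨍ x in B, (F x - G x) ∂μ := by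
    simp only [setAverage_eq, integral_sub hFB hGB, smul_sub]
  calc |⨍ x in A, F x ∂μ - ⨍ x in B, G x ∂μ|
      = |(⨍ x in A, F x ∂μ - ⨍ x in B, F x ∂μ) + ⨍ x in B, (F x - G x) ∂μ| := by
        rw [← hsub]; ring_nf
    _ ≤ |⨍ x in A, F x ∂μ - ⨍ x in B, F x ∂μ| + |⨍ x in B, (F x - G x) ∂μ| := abs_add_le _ _
    _ ≤ 2 * C * symmDiffRatio μ A B + 2 * C * symmDiffRatio ν A' B' :=
        add_le_add
          (abs_setAverage_sub_setAverage_le hFm.aestronglyMeasurable hC hFC hA hB hAfin hBfin)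
          (abs_setAverage_le (mul_nonneg (by positivity) symmDiffRatio_nonneg) hBfin
            fun x _ => hFG x)
    _ = 2 * C * (symmDiffRatio μ A B + symmDiffRatio ν A' B') := by ring

end IteratedAverage

lemma setIntegral_setIntegral_abs_le_of_le_add {α : Type*} [MeasurableSpace α] {μ : Measure α}
    {s : Set α} {F : α → α → ℝ} {h : α → ℝ} (hs : μ s ≠ ∞) (hh : IntegrableOn h s μ)
    (hF : ∀ x ∈ s, ∀ y ∈ s, |F x y| ≤ h x + h y) :
    ∫ x in s, ∫ y in s, |F x y| ∂μ ∂μ ≤ 2 * μ.real s * ∫ x in s, h x ∂μ := by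
  have hconst (c : ℝ) : IntegrableOn (fun _ => c) s μ := integrableOn_const hs
  have hinner : ∀ x ∈ s, ∫ y in s, |F x y| ∂μ ≤ μ.real s * h x + ∫ y in s, h y ∂μ :=
    fun x hx => calc
      ∫ y in s, |F x y| ∂μ ≤ ∫ y in s, (h x + h y) ∂μ :=
        setIntegral_mono_of_nonneg (fun y _ => abs_nonneg _) (hF x hx) ((hconst _).add hh)
      _ = μ.real s * h x + ∫ y in s, h y ∂μ := by
        rw [integral_add (hconst _) hh, setIntegral_const, smul_eq_mul]
  calc ∫ x in s, ∫ y in s, |F x y| ∂μ ∂μ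
      ≤ ∫ x in s, (μ.real s * h x + ∫ y in s, h y ∂μ) ∂μ :=
        setIntegral_mono_of_nonneg (fun x _ => integral_nonneg fun y => abs_nonneg _) hinner
          ((hh.const_mul _).add (hconst _))
    _ = 2 * μ.real s * ∫ x in s, h x ∂μ := by
        rw [integral_add (hh.const_mul _) (hconst _), integral_const_mul, setIntegral_const,
          smul_eq_mul]
        ring

section PartitionMismatch

variable {α ι : Type*} [MeasurableSpace α] {μ : Measure α} {P S : ι → Set α} {x : α}

lemma partitionMismatch_term_nonneg (i : ι) :
    0 ≤ (P i ∩ S i).indicator (fun _ => 2 * symmDiffRatio μ (P i) (S i)) x +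
      (P i ∆ S i).indicator (fun _ => 1) x :=
  add_nonneg (indicator_nonneg (fun _ _ => mul_nonneg zero_le_two symmDiffRatio_nonneg) _)
    (indicator_nonneg (fun _ _ => zero_le_one) _)

lemma integrable_indicator_const {T : Set α} (hT : MeasurableSet T) (hfin : μ T ≠ ∞) (c : ℝ) :
    Integrable (T.indicator fun _ => c) μ :=
  (integrableOn_const hfin).integrable_indicator hT

lemma integrable_partitionMismatch_term (hPm : ∀ i, MeasurableSet (P i))
    (hSm : ∀ i, MeasurableSet (S i)) (hPfin : ∀ i, μ (P i) ≠ ∞) (hSfin : ∀ i, μ (S i) ≠ ∞)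
    (i : ι) :
    Integrable (fun x => (P i ∩ S i).indicator (fun _ => 2 * symmDiffRatio μ (P i) (S i)) x +
      (P i ∆ S i).indicator (fun _ => 1) x) μ :=
  (integrable_indicator_const ((hPm i).inter (hSm i))
    (measure_inter_lt_top_of_left_ne_top (hPfin i)).ne _).add
  (integrable_indicator_const ((hPm i).symmDiff (hSm i))
    (measure_symmDiff_ne_top (hPfin i) (hSfin i)) _)

variable [Fintype ι]

def partitionMismatch (μ : Measure α) (P S : ι → Set α) (x : α) : ℝ :=
  ∑ i, ((P i ∩ S i).indicator (fun _ => 2 * symmDiffRatio μ (P i) (S i)) x +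
    (P i ∆ S i).indicator (fun _ => 1) x)

lemma partitionMismatch_nonneg : 0 ≤ partitionMismatch μ P S x :=
  Finset.sum_nonneg fun i _ => partitionMismatch_term_nonneg i

lemma le_partitionMismatch_of_mem {i : ι} (hx : x ∈ P i ∩ S i) :
    2 * symmDiffRatio μ (P i) (S i) ≤ partitionMismatch μ P S x := by
  refine le_trans ?_ (Finset.single_le_sum (fun j _ => partitionMismatch_term_nonneg j)
    (Finset.mem_univ i))
  rw [indicator_of_mem hx]
  exact le_add_of_nonneg_right (indicator_nonneg (fun _ _ => zero_le_one) _)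

lemma two_le_partitionMismatch {i j : ι} (hi : x ∈ P i \ S i) (hj : x ∈ S j \ P j) :
    2 ≤ partitionMismatch μ P S x := by
  classical
  have hij : i ≠ j := by rintro rfl; exact hj.2 hi.1
  calc (2 : ℝ) = ∑ k ∈ {i, j}, (P k ∆ S k).indicator (fun _ => 1) x := by
        rw [Finset.sum_pair hij, indicator_of_mem (show x ∈ P i ∆ S i from Or.inl hi),
          indicator_of_mem (show x ∈ P j ∆ S j from Or.inr hj)]
        norm_num
    _ ≤ ∑ k, (P k ∆ S k).indicator (fun _ => 1) x :=
        Finset.sum_le_sum_of_subset_of_nonneg (Finset.subset_univ _)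
          fun k _ _ => indicator_nonneg (fun _ _ => zero_le_one) _
    _ ≤ partitionMismatch μ P S x :=
        Finset.sum_le_sum fun k _ => le_add_of_nonneg_left
          (indicator_nonneg (fun _ _ => mul_nonneg zero_le_two symmDiffRatio_nonneg) _)

lemma integrable_partitionMismatch (hPm : ∀ i, MeasurableSet (P i))
    (hSm : ∀ i, MeasurableSet (S i)) (hPfin : ∀ i, μ (P i) ≠ ∞) (hSfin : ∀ i, μ (S i) ≠ ∞) :
    Integrable (partitionMismatch μ P S) μ :=
  integrable_finsetSum _ fun i _ => integrable_partitionMismatch_term hPm hSm hPfin hSfin i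

lemma integral_partitionMismatch_le (hPm : ∀ i, MeasurableSet (P i))
    (hSm : ∀ i, MeasurableSet (S i)) (hPfin : ∀ i, μ (P i) ≠ ∞) (hSfin : ∀ i, μ (S i) ≠ ∞) :
    ∫ x, partitionMismatch μ P S x ∂μ ≤ 3 * ∑ i, μ.real (P i ∆ S i) := by
  unfold partitionMismatch
  rw [integral_finsetSum _ fun i _ => integrable_partitionMismatch_term hPm hSm hPfin hSfin i,
    Finset.mul_sum]
  gcongr with i
  rw [integral_add (integrable_indicator_const ((hPm i).inter (hSm i))
      (measure_inter_lt_top_of_left_ne_top (hPfin i)).ne _)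
    (integrable_indicator_const ((hPm i).symmDiff (hSm i))
      (measure_symmDiff_ne_top (hPfin i) (hSfin i)) _),
    integral_indicator_const _ ((hPm i).inter (hSm i)),
    integral_indicator_const _ ((hPm i).symmDiff (hSm i)), smul_eq_mul, smul_eq_mul, mul_one]
  linarith [measureReal_inter_mul_symmDiffRatio_le (B := S i) (hPfin i)]

end PartitionMismatch

section Partition

variable {ι : Type*} [Fintype ι] {P S : ι → Set ℝ} {W : ℝ → ℝ → ℝ} {x y : ℝ}

lemma IsPartition.measure_ne_top (hP : IsPartition P) (i : ι) : volume (P i) ≠ ∞ :=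
  ((measure_mono (hP.2.1 i)).trans_lt measure_Icc_lt_top).ne

lemma IsPartition.exists_mem (hP : IsPartition P) (hx : x ∈ I01) : ∃ i, x ∈ P i :=
  mem_iUnion.mp (hP.2.2.2 ▸ hx)

-- Cells of measure zero need no special care: `avgP` divides by `0` and `⨍` over a null set is `0`.
lemma avgP_apply_of_mem (hP : Pairwise fun i j => Disjoint (P i) (P j)) {i j : ι}
    (hx : x ∈ P i) (hy : y ∈ P j) :
    avgP P W x y = ⨍ u in P i, ⨍ v in P j, W u v := by
  classical
  have hind {z : ℝ} {k : ι} (hz : z ∈ P k) (k' : ι) :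
      (P k').indicator (fun _ => (1 : ℝ)) z = if k' = k then 1 else 0 := by
    split_ifs with h
    · exact indicator_of_mem (h ▸ hz) _
    · exact indicator_of_notMem (disjoint_right.mp (hP h) hz) _
  simp only [avgP, hind hx, hind hy, mul_ite, mul_one, mul_zero, ite_mul, one_mul, zero_mul,
    Finset.sum_ite_eq', Finset.mem_univ, ↓reduceIte, setAverage_eq, smul_eq_mul,
    integral_const_mul, measureReal_def]
  ring

lemma abs_avgP_le_one (hP : IsPartition P) (hWb : ∀ x y, |W x y| ≤ 1) (hx : x ∈ I01)
    (hy : y ∈ I01) : |avgP P W x y| ≤ 1 := by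
  obtain ⟨i, hi⟩ := hP.exists_mem hx
  obtain ⟨j, hj⟩ := hP.exists_mem hy
  rw [avgP_apply_of_mem hP.2.2.1 hi hj]
  exact abs_setAverage_le zero_le_one (hP.measure_ne_top i) fun u _ =>
    abs_setAverage_le zero_le_one (hP.measure_ne_top j) fun v _ => hWb u v

lemma exists_mem_inter_or_two_le_partitionMismatch (hP : IsPartition P) (hS : IsPartition S)
    (hx : x ∈ I01) : (∃ i, x ∈ P i ∩ S i) ∨ 2 ≤ partitionMismatch volume P S x := by
  refine or_iff_not_imp_left.mpr fun hnone => ?_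
  obtain ⟨i, hi⟩ := hP.exists_mem hx
  obtain ⟨j, hj⟩ := hS.exists_mem hx
  exact two_le_partitionMismatch ⟨hi, fun h => hnone ⟨i, hi, h⟩⟩ ⟨hj, fun h => hnone ⟨j, h, hj⟩⟩

lemma abs_avgP_sub_avgP_le (hW : Measurable (uncurry W)) (hWb : ∀ x y, |W x y| ≤ 1)
    (hP : IsPartition P) (hS : IsPartition S) (hx : x ∈ I01) (hy : y ∈ I01) :
    |avgP P W x y - avgP S W x y| ≤
      partitionMismatch volume P S x + partitionMismatch volume P S y := by
  have htwo : |avgP P W x y - avgP S W x y| ≤ 2 := by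
    linarith [abs_sub (avgP P W x y) (avgP S W x y), abs_avgP_le_one hP hWb hx hy,
      abs_avgP_le_one hS hWb hx hy]
  rcases exists_mem_inter_or_two_le_partitionMismatch hP hS hx with ⟨i, hi⟩ | hx2
  · rcases exists_mem_inter_or_two_le_partitionMismatch hP hS hy with ⟨j, hj⟩ | hy2
    · rw [avgP_apply_of_mem hP.2.2.1 hi.1 hj.1, avgP_apply_of_mem hS.2.2.1 hi.2 hj.2]
      calc _ ≤ 2 * 1 * (symmDiffRatio volume (P i) (S i) + symmDiffRatio volume (P j) (S j)) :=
            abs_iteratedSetAverage_sub_le hW zero_le_one hWb (hP.1 i) (hS.1 i) (hP.1 j) (hS.1 j)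
              (hP.measure_ne_top i) (hS.measure_ne_top i) (hP.measure_ne_top j)
              (hS.measure_ne_top j)
        _ ≤ _ := by
            linarith [le_partitionMismatch_of_mem (μ := volume) hi,
              le_partitionMismatch_of_mem (μ := volume) hj]
    · linarith [partitionMismatch_nonneg (μ := volume) (P := P) (S := S) (x := x)]
  · linarith [partitionMismatch_nonneg (μ := volume) (P := P) (S := S) (x := y)]

end Partition

theorem l1_avg_diff_le_symmDiff {l : ℕ} (W : ℝ → ℝ → ℝ)
    (hW : IsKernel W) (hWb : ∀ x y, |W x y| ≤ 1)
    (P S : Fin l → Set ℝ) (hP : IsPartition P) (hS : IsPartition S) :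
    l1Norm (fun x y => avgP P W x y - avgP S W x y) ≤
      7 * ∑ i, (volume (symmDiff (P i) (S i))).toReal := by
  have hmismatch : Integrable (partitionMismatch volume P S) :=
    integrable_partitionMismatch hP.1 hS.1 hP.measure_ne_top hS.measure_ne_top
  have hd : 0 ≤ ∑ i, volume.real (P i ∆ S i) := Finset.sum_nonneg fun i _ => measureReal_nonneg
  calc l1Norm (fun x y => avgP P W x y - avgP S W x y)
      ≤ 2 * volume.real I01 * ∫ x in I01, partitionMismatch volume P S x :=
        setIntegral_setIntegral_abs_le_of_le_add measure_Icc_lt_top.ne hmismatch.integrableOn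
          fun x hx y hy => abs_avgP_sub_avgP_le hW.1 hWb hP hS hx hy
    _ ≤ 2 * ∫ x, partitionMismatch volume P S x := by
        rw [Real.volume_real_Icc_of_le zero_le_one, sub_zero, mul_one]
        exact mul_le_mul_of_nonneg_left
          (setIntegral_le_integral hmismatch (ae_of_all _ fun _ => partitionMismatch_nonneg))
          zero_le_two
    _ ≤ 2 * (3 * ∑ i, volume.real (P i ∆ S i)) := by
        gcongr
        exact integral_partitionMismatch_le hP.1 hS.1 hP.measure_ne_top hS.measure_ne_top
    _ ≤ 7 * ∑ i, (volume (symmDiff (P i) (S i))).toReal := by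
        simp only [measureReal_def] at hd ⊢
        linarith
end
end

section
/- Let W, U be kernels with values in [0,1] and let P, S be measurable partitions of [0,1] into l parts each. If for all i the parts satisfy λ(P_i △ S_i) ≤ ε_i, then |‖W_P‖₂² − ‖W_S‖₂²| ≤ 14 Σ_i λ(P_i △ S_i). -/
open MeasureTheory Set

noncomputable section

/-! Let `e(A, B) = ∫_A ∫_B W` and `Q i = P i ∩ S i`, so that
`‖W_P‖₂² = ∑ i j, e(P i, P j)² / (λ(P i) λ(P j))`. Viewing `e(A, B)` as the integral of `W` over
`A ×ˢ B`, removing a subrectangle `A' ×ˢ B'` lowers it by at most the removed area since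
`0 ≤ W ≤ 1`, and an elementary inequality turns this into
`|e(A, B)² / λ(A ×ˢ B) - e(A', B')² / λ(A' ×ˢ B')| ≤ λ(A ×ˢ B) - λ(A' ×ˢ B')`.
Summing over `i, j` gives `|‖W_P‖₂² - ‖W_Q‖₂²| ≤ 1 - M²` with `M = ∑ λ(Q i) ≥ 1 - ∑ λ(P i ∆ S i)`,
and likewise for `S`; hence the difference is at most `2 (1 - M²) ≤ 4 ∑ λ(P i ∆ S i)`. -/

open Function

-- `u = 0` is allowed: it forces `x = 0`, and then `x ^ 2 / u = 0` is the intended value.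
lemma abs_sq_div_sub_sq_div_le {a c u x : ℝ} (hx : 0 ≤ x) (hxc : x ≤ c) (hxu : x ≤ u)
    (h : c - x ≤ a - u) : |c ^ 2 / a - x ^ 2 / u| ≤ a - u := by
  rcases (hx.trans hxu).eq_or_lt with hu | hu
  · obtain rfl : x = 0 := le_antisymm (hu ▸ hxu) hx
    rw [← hu, div_zero, sub_zero, sub_zero, abs_of_nonneg (div_nonneg (sq_nonneg c) (by linarith))]
    exact div_le_of_le_mul₀ (by linarith) (by linarith) (by nlinarith)
  have ha : 0 < a := by linarith
  rw [abs_sub_le_iff, div_sub_div _ _ ha.ne' hu.ne', div_sub_div _ _ hu.ne' ha.ne',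
    div_le_iff₀ (by positivity), div_le_iff₀ (by positivity)]
  constructor
  -- with `t = a - u ≥ c - x`: `(x + t)² u - x² (u + t) - t u (u + t) = -t (u - x)²`
  · nlinarith [mul_nonneg (sub_nonneg.2 h) (sq_nonneg (u - x)), mul_le_mul_of_nonneg_right
      (pow_le_pow_left₀ (hx.trans hxc) (show c ≤ x + (a - u) by linarith) 2) hu.le]
  · nlinarith [mul_le_mul_of_nonneg_right (pow_le_pow_left₀ hx hxc 2) hu.le,
      mul_le_mul_of_nonneg_right (pow_le_pow_left₀ hx hxu 2) (show 0 ≤ a - u by linarith),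
      mul_nonneg hu.le (sq_nonneg (a - u))]

lemma norm_le_one_of_mem_Icc {r : ℝ} (hr : r ∈ Icc 0 1) : ‖r‖ ≤ 1 := by
  rw [Real.norm_of_nonneg hr.1]
  exact hr.2

section

variable {α : Type*} [MeasurableSpace α] {μ : Measure α} {f : α → ℝ} {R R' : Set α}

lemma integrableOn_of_mem_Icc (hf : Measurable f) (hf01 : ∀ x, f x ∈ Icc 0 1)
    (hR : μ R ≠ ⊤) : IntegrableOn f R μ :=
  .of_bound hR.lt_top hf.aestronglyMeasurable 1
    (.of_forall fun x => norm_le_one_of_mem_Icc (hf01 x))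

lemma setIntegral_sub_setIntegral_mem_Icc (hf : Measurable f) (hf01 : ∀ x, f x ∈ Icc 0 1)
    (hR' : MeasurableSet R') (hRR' : R' ⊆ R) (hR : μ R ≠ ⊤) :
    ∫ x in R, f x ∂μ - ∫ x in R', f x ∂μ ∈ Icc 0 (μ.real R - μ.real R') := by
  rw [← setIntegral_sdiff hR' (integrableOn_of_mem_Icc hf hf01 hR) hRR',
    ← measureReal_sdiff hRR' hR' hR]
  refine ⟨setIntegral_nonneg_of_ae (.of_forall fun x => (hf01 x).1), ?_⟩
  calc ∫ x in R \ R', f x ∂μ ≤ ‖∫ x in R \ R', f x ∂μ‖ := Real.le_norm_self _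
    _ ≤ 1 * μ.real (R \ R') := norm_setIntegral_le_of_norm_le_const
        (measure_lt_top_of_subset sdiff_subset hR) fun x _ => norm_le_one_of_mem_Icc (hf01 x)
    _ = μ.real (R \ R') := one_mul _

lemma abs_sq_setIntegral_div_sub_le (hf : Measurable f) (hf01 : ∀ x, f x ∈ Icc 0 1)
    (hR' : MeasurableSet R') (hRR' : R' ⊆ R) (hR : μ R ≠ ⊤) :
    |(∫ x in R, f x ∂μ) ^ 2 / μ.real R - (∫ x in R', f x ∂μ) ^ 2 / μ.real R'| ≤
      μ.real R - μ.real R' := by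
  have hR'fin : μ R' ≠ ⊤ := measure_ne_top_of_subset hRR' hR
  obtain ⟨h0, hle⟩ := setIntegral_sub_setIntegral_mem_Icc hf hf01 MeasurableSet.empty
    (empty_subset R') hR'fin
  obtain ⟨hmono, hdiff⟩ := setIntegral_sub_setIntegral_mem_Icc hf hf01 hR' hRR' hR
  simp only [Measure.restrict_empty, integral_zero_measure, measureReal_empty, sub_zero] at h0 hle
  exact abs_sq_div_sub_sq_div_le h0 (sub_nonneg.1 hmono) hle hdiff

end

lemma abs_sq_setIntegral_setIntegral_div_sub_le {α β : Type*}
    [MeasurableSpace α] [MeasurableSpace β] {μ : Measure α} {ν : Measure β} [SFinite μ] [SFinite ν]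
    {W : α → β → ℝ} (hW : Measurable (uncurry W)) (hW01 : ∀ x y, W x y ∈ Icc 0 1)
    {A A' : Set α} {B B' : Set β} (hA' : MeasurableSet A') (hB' : MeasurableSet B')
    (hAA' : A' ⊆ A) (hBB' : B' ⊆ B) (hA : μ A ≠ ⊤) (hB : ν B ≠ ⊤) :
    |(∫ x in A, ∫ y in B, W x y ∂ν ∂μ) ^ 2 / (μ.real A * ν.real B) -
        (∫ x in A', ∫ y in B', W x y ∂ν ∂μ) ^ 2 / (μ.real A' * ν.real B')| ≤
      μ.real A * ν.real B - μ.real A' * ν.real B' := by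
  have hW01' : ∀ z, uncurry W z ∈ Icc 0 1 := fun z => hW01 z.1 z.2
  have hAB : μ.prod ν (A ×ˢ B) ≠ ⊤ := by
    rw [Measure.prod_prod]
    exact ENNReal.mul_ne_top hA hB
  have hA'B' : μ.prod ν (A' ×ˢ B') ≠ ⊤ :=
    measure_ne_top_of_subset (prod_mono hAA' hBB') hAB
  have key := abs_sq_setIntegral_div_sub_le hW hW01' (hA'.prod hB') (prod_mono hAA' hBB') hAB
  rwa [setIntegral_prod _ (integrableOn_of_mem_Icc hW hW01' hAB),
    setIntegral_prod _ (integrableOn_of_mem_Icc hW hW01' hA'B'),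
    measureReal_prod_prod, measureReal_prod_prod] at key

section StepFunction

variable {α ι : Type*} [Fintype ι] {P : ι → Set α}

lemma sum_indicator_mul_of_mem (hP : Pairwise (Disjoint on P)) {i : ι} {x : α} (hx : x ∈ P i)
    (g : ι → ℝ) : ∑ j, (P j).indicator (fun _ => (1 : ℝ)) x * g j = g i := by
  rw [Finset.sum_eq_single i (fun j _ hji => ?_) (by simp), indicator_of_mem hx, one_mul]
  rw [indicator_of_notMem fun hxj => (hP hji).ne_of_mem hxj hx rfl, zero_mul]

lemma sum_indicator_mul_sq (hP : Pairwise (Disjoint on P)) (g : ι → ℝ) (x : α) :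
    (∑ i, (P i).indicator (fun _ => (1 : ℝ)) x * g i) ^ 2 =
      ∑ i, (P i).indicator (fun _ => (1 : ℝ)) x * g i ^ 2 := by
  by_cases hx : ∃ i, x ∈ P i
  · obtain ⟨i, hi⟩ := hx
    rw [sum_indicator_mul_of_mem hP hi, sum_indicator_mul_of_mem hP hi]
  · push Not at hx
    simp [indicator_of_notMem (hx _)]

lemma integral_sum_indicator_mul [MeasurableSpace α] {μ : Measure α}
    (hPm : ∀ i, MeasurableSet (P i)) (hPμ : ∀ i, μ (P i) ≠ ⊤) (c : ι → ℝ) :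
    ∫ x, ∑ i, (P i).indicator (fun _ => (1 : ℝ)) x * c i ∂μ = ∑ i, μ.real (P i) * c i := by
  simp_rw [← indicator_mul_const, one_mul]
  rw [integral_finsetSum _ fun i _ =>
    (integrable_indicator_iff (hPm i)).2 (integrableOn_const (hPμ i))]
  simp_rw [integral_indicator_const _ (hPm _), smul_eq_mul]

end StepFunction

lemma volume_ne_top_of_subset_I01 {A : Set ℝ} (hA : A ⊆ I01) : volume A ≠ ⊤ :=
  measure_ne_top_of_subset hA measure_Icc_lt_top.ne

theorem l2sq_avgP {ι : Type*} [Fintype ι] (W : ℝ → ℝ → ℝ) {P : ι → Set ℝ}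
    (hPm : ∀ i, MeasurableSet (P i)) (hPs : ∀ i, P i ⊆ I01) (hPd : Pairwise (Disjoint on P)) :
    l2sq (avgP P W) = ∑ i, ∑ j,
      (∫ u in P i, ∫ v in P j, W u v) ^ 2 / (volume.real (P i) * volume.real (P j)) := by
  set q : ι → ι → ℝ := fun i j =>
    (∫ u in P i, ∫ v in P j, W u v) / (volume (P i)).toReal / (volume (P j)).toReal
  have hPμ : ∀ i, volume.restrict I01 (P i) ≠ ⊤ := fun i => by finiteness
  have hsq : ∀ x y, avgP P W x y ^ 2 = ∑ j, (P j).indicator (fun _ => (1 : ℝ)) y *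
      ∑ i, (P i).indicator (fun _ => (1 : ℝ)) x * q i j ^ 2 := fun x y => by
    have : avgP P W x y = ∑ i, (P i).indicator (fun _ => (1 : ℝ)) x *
        ∑ j, (P j).indicator (fun _ => (1 : ℝ)) y * q i j := by
      simp only [avgP, Finset.mul_sum, mul_assoc, q]
    simp_rw [this, sum_indicator_mul_sq hPd, Finset.mul_sum]
    rw [Finset.sum_comm]
    exact Finset.sum_congr rfl fun _ _ => Finset.sum_congr rfl fun _ _ => by ring
  have hvol : ∀ i, (volume.restrict I01).real (P i) = volume.real (P i) := fun i => by
    rw [measureReal_restrict_apply (hPm i), inter_eq_left.2 (hPs i)]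
  have hinner : ∀ x, ∫ y in I01, avgP P W x y ^ 2 =
      ∑ i, (P i).indicator (fun _ => (1 : ℝ)) x * ∑ j, volume.real (P j) * q i j ^ 2 := by
    intro x
    simp_rw [hsq, integral_sum_indicator_mul hPm hPμ, hvol, Finset.mul_sum]
    rw [Finset.sum_comm]
    exact Finset.sum_congr rfl fun _ _ => Finset.sum_congr rfl fun _ _ => by ring
  have hterm : ∀ a b e : ℝ, a * (b * (e / a / b) ^ 2) = e ^ 2 / (a * b) := fun a b e => by
    rcases eq_or_ne a 0 with rfl | ha
    · simp
    rcases eq_or_ne b 0 with rfl | hb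
    · simp
    field_simp
  simp_rw [l2sq, hinner, integral_sum_indicator_mul hPm hPμ, hvol, Finset.mul_sum]
  exact Finset.sum_congr rfl fun _ _ => Finset.sum_congr rfl fun _ _ => hterm _ _ _

theorem abs_l2sq_avgP_sub_le {ι : Type*} [Fintype ι] {W : ℝ → ℝ → ℝ}
    (hW : Measurable (uncurry W)) (hW01 : ∀ x y, W x y ∈ Icc 0 1) {P Q : ι → Set ℝ}
    (hPm : ∀ i, MeasurableSet (P i)) (hPs : ∀ i, P i ⊆ I01) (hPd : Pairwise (Disjoint on P))
    (hQm : ∀ i, MeasurableSet (Q i)) (hQP : ∀ i, Q i ⊆ P i) :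
    |l2sq (avgP P W) - l2sq (avgP Q W)| ≤
      (∑ i, volume.real (P i)) ^ 2 - (∑ i, volume.real (Q i)) ^ 2 := by
  rw [l2sq_avgP W hPm hPs hPd, l2sq_avgP W hQm (fun i => (hQP i).trans (hPs i))
      (hPd.mono fun i j h => h.mono (hQP i) (hQP j)),
    sq, sq, Finset.sum_mul_sum, Finset.sum_mul_sum]
  simp only [← Finset.sum_sub_distrib]
  refine (Finset.abs_sum_le_sum_abs _ _).trans <| Finset.sum_le_sum fun i _ =>
    (Finset.abs_sum_le_sum_abs _ _).trans <| Finset.sum_le_sum fun j _ => ?_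
  exact abs_sq_setIntegral_setIntegral_div_sub_le hW hW01 (hQm i) (hQm j) (hQP i) (hQP j)
    (volume_ne_top_of_subset_I01 (hPs i)) (volume_ne_top_of_subset_I01 (hPs j))

lemma measureReal_sub_measureReal_inter_le_symmDiff {α : Type*} [MeasurableSpace α]
    {μ : Measure α} {A B : Set α} (hA : μ A ≠ ⊤) (hB : μ B ≠ ⊤) :
    μ.real A - μ.real (A ∩ B) ≤ μ.real (symmDiff A B) :=
  calc μ.real A - μ.real (A ∩ B) ≤ μ.real (A \ (A ∩ B)) :=
        le_measureReal_sdiff (measure_ne_top_of_subset inter_subset_left hA)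
    _ = μ.real (A \ B) := by rw [sdiff_self_inter]
    _ ≤ μ.real (symmDiff A B) := measureReal_mono le_sup_left (measure_symmDiff_ne_top hA hB)

lemma IsPartition.sum_measureReal {ι : Type*} [Fintype ι] {P : ι → Set ℝ} (hP : IsPartition P) :
    ∑ i, volume.real (P i) = 1 := by
  obtain ⟨hPm, hPs, hPd, hPu⟩ := hP
  rw [← measureReal_iUnion_fintype hPd hPm fun i => volume_ne_top_of_subset_I01 (hPs i), hPu]
  simp

theorem l2sq_avg_diff_le_symmDiff_general {l : ℕ} (W : ℝ → ℝ → ℝ)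
    (hW : IsKernel W) (hWrange : ∀ x y, W x y ∈ Set.Icc (0:ℝ) 1)
    (P S : Fin l → Set ℝ) (hP : IsPartition P) (hS : IsPartition S) :
    |l2sq (avgP P W) - l2sq (avgP S W)| ≤
      14 * ∑ i, (volume (symmDiff (P i) (S i))).toReal := by
  have hPsum := hP.sum_measureReal
  have hSsum := hS.sum_measureReal
  obtain ⟨hPm, hPs, hPd, -⟩ := hP
  obtain ⟨hSm, hSs, hSd, -⟩ := hS
  have hQm : ∀ i, MeasurableSet (P i ∩ S i) := fun i => (hPm i).inter (hSm i)
  have hPQ := abs_l2sq_avgP_sub_le hW.1 hWrange hPm hPs hPd hQm fun _ => inter_subset_left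
  have hSQ := abs_l2sq_avgP_sub_le hW.1 hWrange hSm hSs hSd hQm fun _ => inter_subset_right
  rw [hPsum] at hPQ
  rw [hSsum] at hSQ
  set M := ∑ i, volume.real (P i ∩ S i)
  have hM0 : 0 ≤ M := Finset.sum_nonneg fun i _ => measureReal_nonneg
  have hM1 : M ≤ 1 := hPsum ▸ Finset.sum_le_sum fun i _ =>
    measureReal_mono inter_subset_left (volume_ne_top_of_subset_I01 (hPs i))
  have hMD : 1 - M ≤ ∑ i, volume.real (symmDiff (P i) (S i)) := by
    rw [← hPsum, ← Finset.sum_sub_distrib]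
    exact Finset.sum_le_sum fun i _ => measureReal_sub_measureReal_inter_le_symmDiff
      (volume_ne_top_of_subset_I01 (hPs i)) (volume_ne_top_of_subset_I01 (hSs i))
  calc |l2sq (avgP P W) - l2sq (avgP S W)|
      ≤ |l2sq (avgP P W) - l2sq (avgP (fun i => P i ∩ S i) W)| +
          |l2sq (avgP S W) - l2sq (avgP (fun i => P i ∩ S i) W)| := by
        rw [abs_sub_comm (l2sq (avgP S W))]
        exact abs_sub_le _ _ _
    _ ≤ 2 * (1 - M ^ 2) := by linarith
    _ ≤ 14 * ∑ i, volume.real (symmDiff (P i) (S i)) := by nlinarith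

theorem l2sq_avg_diff_le_symmDiff {l : ℕ} (W : ℝ → ℝ → ℝ)
    (hW : IsKernel W) (hWrange : ∀ x y, W x y ∈ Set.Icc (0:ℝ) 1)
    (P S : Fin l → Set ℝ) (hP : IsPartition P) (hS : IsPartition S)
    (ε : Fin l → ℝ) (hε : ∀ i, (volume (symmDiff (P i) (S i))).toReal ≤ ε i) :
    |l2sq (avgP P W) - l2sq (avgP S W)| ≤
      14 * ∑ i, (volume (symmDiff (P i) (S i))).toReal :=
  l2sq_avg_diff_le_symmDiff_general W hW hWrange P S hP hS
end
end

section
/- (Graphon version of the intermediate regularity lemma) For every ε > 0 and every graphon W : [0,1]² → [0,1], there exists a measurable partition P of [0,1] into m ≤ 16^{2^{1/ε²}}/4 parts such that ‖W − W_P‖_{□Q} ≤ ε for every partition Q of [0,1] into at most m classes. -/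
open MeasureTheory Set

noncomputable section

/-!
Energy increment. The energy of a partition `P` is the mean square of the densities of `W` on
the blocks `P i × P j`; for a graphon it lies in `[0, 1]`. If `W - W_P` has `□Q`-norm larger
than `ε` for a partition `Q` with at most `|P|` classes, witnessed by `S j, T j ⊆ Q j`, refine
`P` by `Q` and by all the `S j`, `T j`: at most `4 |P|²` cells. The witness sum is at most the
weighted `L¹` distance between the block densities of the refinement and those of `P`; by
Cauchy–Schwarz its square is at most the squared weighted `L²` distance, which by Pythagoras is
the gain in energy. So the energy grows by more than `ε²` at each step, and starting from the
trivial partition a regular partition is reached within `⌈1/ε²⌉` steps, with at most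
`4 ^ (2 ^ k - 1)` parts after `k` steps.
-/

namespace IsPartition

variable {ι : Type*} [Fintype ι] {P : ι → Set ℝ}

lemma measurableSet (hP : IsPartition P) (i : ι) : MeasurableSet (P i) := hP.1 i

lemma subset_unit (hP : IsPartition P) (i : ι) : P i ⊆ I01 := hP.2.1 i

lemma volume_ne_top (hP : IsPartition P) (i : ι) : volume (P i) ≠ ⊤ :=
  (measure_lt_top_of_subset (hP.subset_unit i) (by simp [Real.volume_Icc])).ne

lemma eq_of_mem (hP : IsPartition P) {x : ℝ} {i j : ι} (hi : x ∈ P i) (hj : x ∈ P j) :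
    i = j :=
  by_contra fun hij => Set.disjoint_left.mp (hP.2.2.1 hij) hi hj

lemma exists_mem_s10 (hP : IsPartition P) {x : ℝ} (hx : x ∈ I01) : ∃ i, x ∈ P i :=
  mem_iUnion.mp (hP.2.2.2 ▸ hx)

lemma sum_measureReal_s10 (hP : IsPartition P) : ∑ i, volume.real (P i) = 1 := by
  rw [← measureReal_iUnion_fintype hP.2.2.1 hP.measurableSet hP.volume_ne_top, hP.2.2.2,
    Real.volume_real_Icc]
  norm_num

lemma biUnion_fiber {ρ : Type*} [Fintype ρ] {R : ρ → Set ℝ} [DecidableEq ι]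
    (hP : IsPartition P) (hR : IsPartition R) {π : ρ → ι} (hπ : ∀ p, R p ⊆ P (π p)) (i : ι) :
    ⋃ p ∈ Finset.univ.filter (π · = i), R p = P i := by
  refine Subset.antisymm (iUnion₂_subset fun p hp => ?_) fun x hx => ?_
  · rw [← (Finset.mem_filter.mp hp).2]
    exact hπ p
  obtain ⟨p, hp⟩ := hR.exists_mem_s10 (hP.subset_unit i hx)
  exact mem_iUnion₂.mpr ⟨p, by simp [hP.eq_of_mem (hπ p hp) hx], hp⟩

lemma comp_equiv {κ : Type*} [Fintype κ] (hP : IsPartition P) (e : κ ≃ ι) :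
    IsPartition (P ∘ e) :=
  ⟨fun k => hP.1 _, fun k => hP.2.1 _, fun k l hkl => hP.2.2.1 (e.injective.ne hkl), by
    rw [← hP.2.2.2]; exact e.surjective.iUnion_comp P⟩

end IsPartition

lemma isPartition_unit : IsPartition (fun _ : Fin 1 => I01) :=
  ⟨fun _ => measurableSet_Icc, fun _ => subset_rfl,
    fun i j hij => (hij (Subsingleton.elim i j)).elim, iUnion_const I01⟩

namespace IsKernel

variable {W V : ℝ → ℝ → ℝ}

lemma sub (hW : IsKernel W) (hV : IsKernel V) : IsKernel fun x y => W x y - V x y := by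
  obtain ⟨C, hC⟩ := hW.2
  obtain ⟨D, hD⟩ := hV.2
  exact ⟨hW.1.sub hV.1, C + D, fun x y => (abs_sub _ _).trans (add_le_add (hC x y) (hD x y))⟩

lemma integrableOn_right (hW : IsKernel W) (x : ℝ) {B : Set ℝ} (hB : volume B ≠ ⊤) :
    IntegrableOn (W x) B := by
  obtain ⟨C, hC⟩ := hW.2
  have := isFiniteMeasure_restrict.mpr hB
  exact ⟨hW.1.of_uncurry_left.aestronglyMeasurable,
    HasFiniteIntegral.of_bounded (C := C) (Filter.Eventually.of_forall (hC x))⟩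

lemma integrableOn_integral_right (hW : IsKernel W) {A : Set ℝ} (hA : volume A ≠ ⊤)
    {B : Set ℝ} (hB : volume B ≠ ⊤) : IntegrableOn (fun x => ∫ y in B, W x y) A := by
  obtain ⟨C, hC⟩ := hW.2
  have := isFiniteMeasure_restrict.mpr hA
  refine ⟨(hW.1.stronglyMeasurable.integral_prod_right
      (ν := volume.restrict B)).aestronglyMeasurable,
    HasFiniteIntegral.of_bounded (C := C * volume.real B) (Filter.Eventually.of_forall fun x =>
      norm_setIntegral_le_of_norm_le_const hB.lt_top fun y _ => hC x y)⟩

end IsKernel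

namespace Graphon

def edgeMass (W : ℝ → ℝ → ℝ) (A B : Set ℝ) : ℝ := ∫ x in A, ∫ y in B, W x y

def edgeDensity (W : ℝ → ℝ → ℝ) (A B : Set ℝ) : ℝ :=
  edgeMass W A B / volume.real A / volume.real B

variable {W V : ℝ → ℝ → ℝ} {A B : Set ℝ}

lemma edgeMass_sub (hW : IsKernel W) (hV : IsKernel V) (hA : volume A ≠ ⊤)
    (hB : volume B ≠ ⊤) :
    edgeMass (fun x y => W x y - V x y) A B = edgeMass W A B - edgeMass V A B := by
  unfold edgeMass
  rw [← integral_sub (hW.integrableOn_integral_right hA hB)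
    (hV.integrableOn_integral_right hA hB)]
  exact integral_congr_ae (Filter.Eventually.of_forall fun x =>
    integral_sub (hW.integrableOn_right x hB) (hV.integrableOn_right x hB))

lemma edgeMass_biUnion {ρ : Type*} (hW : IsKernel W) {R : ρ → Set ℝ}
    (hRm : ∀ p, MeasurableSet (R p)) (hRd : Pairwise (Function.onFun Disjoint R))
    (hRf : ∀ p, volume (R p) ≠ ⊤) (s t : Finset ρ) :
    edgeMass W (⋃ p ∈ s, R p) (⋃ q ∈ t, R q)
      = ∑ p ∈ s, ∑ q ∈ t, edgeMass W (R p) (R q) := by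
  have hfin : ∀ u : Finset ρ, volume (⋃ p ∈ u, R p) ≠ ⊤ := fun u =>
    (measure_biUnion_lt_top u.finite_toSet fun p _ => (hRf p).lt_top).ne
  unfold edgeMass
  rw [integral_biUnion_finset s (fun p _ => hRm p) (hRd.set_pairwise _)
    (fun p _ => hW.integrableOn_integral_right (hRf p) (hfin t))]
  refine Finset.sum_congr rfl fun p _ => ?_
  rw [← integral_finsetSum _ fun q _ => hW.integrableOn_integral_right (hRf p) (hRf q)]
  exact integral_congr_ae (Filter.Eventually.of_forall fun x =>
    integral_biUnion_finset t (fun q _ => hRm q) (hRd.set_pairwise _)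
      (fun q _ => hW.integrableOn_right x (hRf q)))

lemma abs_edgeMass_le (hb : ∀ x y, |W x y| ≤ 1) (hA : volume A ≠ ⊤)
    (hB : volume B ≠ ⊤) :
    |edgeMass W A B| ≤ volume.real A * volume.real B := by
  have hinner : ∀ x, ‖∫ y in B, W x y‖ ≤ volume.real B := fun x => by
    simpa using norm_setIntegral_le_of_norm_le_const (f := W x) hB.lt_top fun y _ => hb x y
  have := norm_setIntegral_le_of_norm_le_const (f := fun x => ∫ y in B, W x y) hA.lt_top
    fun x _ => hinner x
  rw [← Real.norm_eq_abs, mul_comm]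
  exact this

lemma mul_edgeDensity (hA : volume A ≠ ⊤) (hB : volume B ≠ ⊤) :
    volume.real A * volume.real B * edgeDensity W A B = edgeMass W A B := by
  by_cases hA0 : volume.real A = 0
  · rw [hA0, zero_mul, zero_mul, edgeMass,
      Measure.restrict_eq_zero.mpr ((measureReal_eq_zero_iff hA).mp hA0), integral_zero_measure]
  by_cases hB0 : volume.real B = 0
  · have hB0' := Measure.restrict_eq_zero.mpr ((measureReal_eq_zero_iff hB).mp hB0)
    simp [hB0, edgeMass, hB0']
  rw [edgeDensity]
  field_simp

lemma abs_edgeDensity_le (hb : ∀ x y, |W x y| ≤ 1) (hA : volume A ≠ ⊤)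
    (hB : volume B ≠ ⊤) :
    |edgeDensity W A B| ≤ 1 := by
  have hvol : 0 ≤ volume.real A * volume.real B := by positivity
  rw [edgeDensity, div_div, abs_div, abs_of_nonneg hvol]
  exact div_le_one_of_le₀ (abs_edgeMass_le hb hA hB) hvol

section avgP

variable {ι : Type*} [Fintype ι] {P : ι → Set ℝ}

lemma avgP_eq_edgeDensity (hP : Pairwise (Function.onFun Disjoint P)) {x y : ℝ} {i j : ι}
    (hx : x ∈ P i) (hy : y ∈ P j) : avgP P W x y = edgeDensity W (P i) (P j) := by
  have hmem : ∀ {z : ℝ} {k l : ι}, z ∈ P k → l ≠ k → z ∉ P l := fun hk hlk hl =>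
    Set.disjoint_left.mp (hP hlk) hl hk
  rw [avgP, Finset.sum_eq_single i (fun k _ hki => by simp [hmem hx hki]) (by simp),
    Finset.sum_eq_single j (fun l _ hlj => by simp [hmem hy hlj]) (by simp)]
  simp [hx, hy, edgeDensity, edgeMass, measureReal_def]

lemma isKernel_avgP (hP : ∀ i, MeasurableSet (P i)) : IsKernel (avgP P W) := by
  refine ⟨?_, ∑ i, ∑ j, |edgeDensity W (P i) (P j)|, fun x y => ?_⟩
  · unfold avgP
    fun_prop (disch := exact hP _)
  · refine (Finset.abs_sum_le_sum_abs _ _).trans (Finset.sum_le_sum fun i _ => ?_)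
    refine (Finset.abs_sum_le_sum_abs _ _).trans (Finset.sum_le_sum fun j _ => ?_)
    rw [abs_mul, abs_mul]
    refine mul_le_of_le_one_left (abs_nonneg _) (mul_le_one₀ ?_ (abs_nonneg _) ?_)
    all_goals simp only [indicator]; split_ifs <;> simp

lemma edgeMass_avgP (hP : Pairwise (Function.onFun Disjoint P)) {i j : ι}
    (hA : MeasurableSet A) (hB : MeasurableSet B) (hAi : A ⊆ P i) (hBj : B ⊆ P j) :
    edgeMass (avgP P W) A B = volume.real A * volume.real B * edgeDensity W (P i) (P j) := by
  have hinner : ∀ x ∈ A, ∫ y in B, avgP P W x y = volume.real B * edgeDensity W (P i) (P j) :=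
    fun x hx => by
      rw [setIntegral_congr_fun hB fun y hy => avgP_eq_edgeDensity hP (hAi hx) (hBj hy),
        setIntegral_const, smul_eq_mul]
  rw [edgeMass, setIntegral_congr_fun hA hinner, setIntegral_const, smul_eq_mul, mul_assoc]

end avgP

def energy (W : ℝ → ℝ → ℝ) {ι : Type*} [Fintype ι] (P : ι → Set ℝ) : ℝ :=
  ∑ i, ∑ j, volume.real (P i) * volume.real (P j) * edgeDensity W (P i) (P j) ^ 2

section energy

variable {ι : Type*} [Fintype ι] {P : ι → Set ℝ}

lemma energy_nonneg : 0 ≤ energy W P := by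
  unfold energy
  positivity

lemma energy_le_one (hb : ∀ x y, |W x y| ≤ 1) (hP : IsPartition P) : energy W P ≤ 1 := by
  calc energy W P ≤ ∑ i, ∑ j, volume.real (P i) * volume.real (P j) := by
        refine Finset.sum_le_sum fun i _ => Finset.sum_le_sum fun j _ => ?_
        refine mul_le_of_le_one_right (by positivity) ?_
        exact (sq_le_one_iff_abs_le_one _).mpr
          (abs_edgeDensity_le hb (hP.volume_ne_top i) (hP.volume_ne_top j))
    _ = 1 := by rw [← Finset.sum_mul_sum, hP.sum_measureReal_s10, one_mul]

lemma energy_comp_equiv {κ : Type*} [Fintype κ] (e : κ ≃ ι) :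
    energy W (P ∘ e) = energy W P := by
  simp only [energy, Function.comp_apply]
  rw [← e.sum_comp]
  exact Finset.sum_congr rfl fun i _ => e.sum_comp fun j =>
    volume.real (P (e i)) * volume.real (P j) * edgeDensity W (P (e i)) (P j) ^ 2

end energy

section weighted

variable {ρ ι κ : Type*} [Fintype ρ] [Fintype ι] [DecidableEq ι]

lemma sum_sum_fiberwise (π : ρ → ι) (f : ρ → ρ → ℝ) :
    ∑ i, ∑ j, ∑ p with π p = i, ∑ q with π q = j, f p q = ∑ p, ∑ q, f p q := by
  calc ∑ i, ∑ j, ∑ p with π p = i, ∑ q with π q = j, f p q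
      = ∑ i, ∑ p with π p = i, ∑ j, ∑ q with π q = j, f p q :=
        Finset.sum_congr rfl fun i _ => Finset.sum_comm
    _ = ∑ p, ∑ q, f p q := by
        simp only [Finset.sum_fiberwise]

lemma sum_sum_mul_comp (π : ρ → ι) (g : ρ → ρ → ℝ) (y : ι → ι → ℝ) :
    ∑ p, ∑ q, g p q * y (π p) (π q)
      = ∑ i, ∑ j, (∑ p with π p = i, ∑ q with π q = j, g p q) * y i j := by
  rw [← sum_sum_fiberwise π]
  refine Finset.sum_congr rfl fun i _ => Finset.sum_congr rfl fun j _ => ?_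
  rw [Finset.sum_mul]
  refine Finset.sum_congr rfl fun p hp => ?_
  rw [Finset.sum_mul]
  refine Finset.sum_congr rfl fun q hq => ?_
  rw [(Finset.mem_filter.mp hp).2, (Finset.mem_filter.mp hq).2]

lemma sum_mul_sub_sq_eq (π : ρ → ι) (w : ρ → ℝ) (w' : ι → ℝ)
    (hw' : ∀ i, ∑ p with π p = i, w p = w' i) (x : ρ → ρ → ℝ) (y : ι → ι → ℝ)
    (hxy : ∀ i j, ∑ p with π p = i, ∑ q with π q = j, w p * w q * x p q
      = w' i * w' j * y i j) :
    ∑ p, ∑ q, w p * w q * (x p q - y (π p) (π q)) ^ 2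
      = ∑ p, ∑ q, w p * w q * x p q ^ 2 - ∑ i, ∑ j, w' i * w' j * y i j ^ 2 := by
  have hcross := sum_sum_mul_comp π (fun p q => w p * w q * x p q) y
  have hsq := sum_sum_mul_comp π (fun p q => w p * w q) (fun i j => y i j ^ 2)
  simp only [hxy, ← Finset.sum_mul_sum, hw'] at hcross hsq
  have hexpand : ∀ p q, w p * w q * (x p q - y (π p) (π q)) ^ 2 = w p * w q * x p q ^ 2
      - 2 * (w p * w q * x p q * y (π p) (π q)) + w p * w q * y (π p) (π q) ^ 2 :=
    fun p q => by ring
  simp only [hexpand, Finset.sum_add_distrib, Finset.sum_sub_distrib, ← Finset.mul_sum, hcross,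
    hsq]
  have hyy : ∀ i j, w' i * w' j * y i j * y i j = w' i * w' j * y i j ^ 2 := fun i j => by ring
  simp only [hyy]
  ring

lemma sq_sum_mul_abs_le (w : ρ → ℝ) (hw : ∀ p, 0 ≤ w p) (hw1 : ∑ p, w p = 1)
    (d : ρ → ρ → ℝ) :
    (∑ p, ∑ q, w p * w q * |d p q|) ^ 2 ≤ ∑ p, ∑ q, w p * w q * d p q ^ 2 := by
  simp only [← Fintype.sum_prod_type']
  have := Finset.sum_sq_le_sum_mul_sum_of_sq_le_mul Finset.univ
    (r := fun z : ρ × ρ => w z.1 * w z.2 * |d z.1 z.2|) (f := fun z => w z.1 * w z.2)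
    (g := fun z => w z.1 * w z.2 * d z.1 z.2 ^ 2)
    (fun z _ => mul_nonneg (hw _) (hw _))
    (fun z _ => mul_nonneg (mul_nonneg (hw _) (hw _)) (sq_nonneg _))
    (fun z _ => le_of_eq (by rw [mul_pow, sq_abs]; ring))
  rwa [Fintype.sum_prod_type' (fun p q => w p * w q), ← Finset.sum_mul_sum, hw1, one_mul,
    one_mul] at this

lemma sum_sum_le_of_subset_fiber [Fintype κ] [DecidableEq κ] (g : ρ → κ) (s : κ → Finset ρ)
    (hs : ∀ k, ∀ p ∈ s k, g p = k) (f : ρ → ℝ) (hf : ∀ p, 0 ≤ f p) :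
    ∑ k, ∑ p ∈ s k, f p ≤ ∑ p, f p := by
  rw [← Finset.sum_fiberwise Finset.univ g f]
  exact Finset.sum_le_sum fun k _ => Finset.sum_le_sum_of_subset_of_nonneg
    (fun p hp => Finset.mem_filter.mpr ⟨Finset.mem_univ _, hs k p hp⟩) fun p _ _ => hf p

end weighted

section cell

variable {ι κ : Type*}

/-- The common refinement of `P` and `Q` by the sets `S j`, `T j` inside each `Q j`: the cell
`(i, j, b, c)` lies in `P i ∩ Q j`, inside or outside `S j` according to `b`, and inside or
outside `T j` according to `c`. -/
def cell (P : ι → Set ℝ) (Q S T : κ → Set ℝ) (p : ι × κ × Bool × Bool) : Set ℝ :=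
  P p.1 ∩ Q p.2.1 ∩
    {x | (x ∈ S p.2.1 ↔ p.2.2.1 = true) ∧ (x ∈ T p.2.1 ↔ p.2.2.2 = true)}

variable {P : ι → Set ℝ} {Q S T : κ → Set ℝ}

lemma mem_cell {x : ℝ} {i : ι} {j : κ} {b c : Bool} :
    x ∈ cell P Q S T (i, j, b, c) ↔
      x ∈ P i ∧ x ∈ Q j ∧ (x ∈ S j ↔ b = true) ∧ (x ∈ T j ↔ c = true) := by
  simp only [cell, mem_inter_iff, mem_ofPred_eq, and_assoc]

lemma cell_subset_fst (p : ι × κ × Bool × Bool) : cell P Q S T p ⊆ P p.1 :=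
  fun _ hx => hx.1.1

lemma isPartition_cell [Fintype ι] [Fintype κ] (hP : IsPartition P) (hQ : IsPartition Q)
    (hS : ∀ j, MeasurableSet (S j)) (hT : ∀ j, MeasurableSet (T j)) :
    IsPartition (cell P Q S T) := by
  classical
  have hside : ∀ A : Set ℝ, MeasurableSet A → ∀ b : Bool,
      MeasurableSet {x | x ∈ A ↔ b = true} :=
    fun A hA b => by
      cases b
      · simp only [Bool.false_eq_true, iff_false]
        exact hA.compl
      · simp only [iff_true]
        exact hA
  refine ⟨fun ⟨i, j, b, c⟩ => ((hP.measurableSet i).inter (hQ.measurableSet j)).inter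
      ((hside _ (hS j) b).inter (hside _ (hT j) c)),
    fun p => (cell_subset_fst p).trans (hP.subset_unit _), ?_, ?_⟩
  · rintro ⟨i, j, b, c⟩ ⟨i', j', b', c'⟩ hne
    refine Set.disjoint_left.mpr fun x hx hx' => hne ?_
    rw [mem_cell] at hx hx'
    obtain rfl := hP.eq_of_mem hx.1 hx'.1
    obtain rfl := hQ.eq_of_mem hx.2.1 hx'.2.1
    rw [Bool.eq_iff_iff.mpr (hx.2.2.1.symm.trans hx'.2.2.1),
      Bool.eq_iff_iff.mpr (hx.2.2.2.symm.trans hx'.2.2.2)]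
  · refine Subset.antisymm (iUnion_subset fun p => (cell_subset_fst p).trans (hP.subset_unit _))
      fun x hx => ?_
    obtain ⟨i, hi⟩ := hP.exists_mem_s10 hx
    obtain ⟨j, hj⟩ := hQ.exists_mem_s10 hx
    exact mem_iUnion.mpr ⟨(i, j, decide (x ∈ S j), decide (x ∈ T j)),
      mem_cell.mpr ⟨hi, hj, by simp, by simp⟩⟩

lemma biUnion_cell_left [Fintype ι] [Fintype κ] [DecidableEq κ] (hP : IsPartition P)
    (hQ : IsPartition Q) (hSQ : ∀ j, S j ⊆ Q j) (j : κ) :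
    ⋃ p ∈ Finset.univ.filter (fun p : ι × κ × Bool × Bool => p.2.1 = j ∧ p.2.2.1 = true),
      cell P Q S T p = S j := by
  classical
  refine Subset.antisymm (iUnion₂_subset fun ⟨i, j', b, c⟩ hp x hx => ?_) fun x hx => ?_
  · obtain ⟨rfl, rfl⟩ := (Finset.mem_filter.mp hp).2
    exact (mem_cell.mp hx).2.2.1.mpr rfl
  obtain ⟨i, hi⟩ := hP.exists_mem_s10 (hQ.subset_unit j (hSQ j hx))
  exact mem_iUnion₂.mpr ⟨(i, j, true, decide (x ∈ T j)), by simp,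
    mem_cell.mpr ⟨hi, hSQ j hx, by simp [hx], by simp⟩⟩

lemma biUnion_cell_right [Fintype ι] [Fintype κ] [DecidableEq κ] (hP : IsPartition P)
    (hQ : IsPartition Q) (hTQ : ∀ j, T j ⊆ Q j) (j : κ) :
    ⋃ p ∈ Finset.univ.filter (fun p : ι × κ × Bool × Bool => p.2.1 = j ∧ p.2.2.2 = true),
      cell P Q S T p = T j := by
  classical
  refine Subset.antisymm (iUnion₂_subset fun ⟨i, j', b, c⟩ hp x hx => ?_) fun x hx => ?_
  · obtain ⟨rfl, rfl⟩ := (Finset.mem_filter.mp hp).2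
    exact (mem_cell.mp hx).2.2.2.mpr rfl
  obtain ⟨i, hi⟩ := hP.exists_mem_s10 (hQ.subset_unit j (hTQ j hx))
  exact mem_iUnion₂.mpr ⟨(i, j, decide (x ∈ S j), true), by simp,
    mem_cell.mpr ⟨hi, hTQ j hx, by simp, by simp [hx]⟩⟩

end cell

section refinement

variable {ι ρ : Type*} [Fintype ι] [Fintype ρ] {P : ι → Set ℝ} {R : ρ → Set ℝ}

lemma edgeMass_sub_avgP_of_subset (hW : IsKernel W) (hP : IsPartition P) (hR : IsPartition R)
    {π : ρ → ι} (hπ : ∀ p, R p ⊆ P (π p)) (p q : ρ) :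
    edgeMass (fun x y => W x y - avgP P W x y) (R p) (R q)
      = volume.real (R p) * volume.real (R q)
        * (edgeDensity W (R p) (R q) - edgeDensity W (P (π p)) (P (π q))) := by
  rw [edgeMass_sub hW (isKernel_avgP hP.measurableSet) (hR.volume_ne_top p) (hR.volume_ne_top q),
    edgeMass_avgP hP.2.2.1 (hR.measurableSet p) (hR.measurableSet q) (hπ p) (hπ q),
    ← mul_edgeDensity (hR.volume_ne_top p) (hR.volume_ne_top q)]
  ring

lemma energy_sub_energy_of_subset (hW : IsKernel W) (hP : IsPartition P) (hR : IsPartition R)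
    {π : ρ → ι} (hπ : ∀ p, R p ⊆ P (π p)) :
    energy W R - energy W P = ∑ p, ∑ q, volume.real (R p) * volume.real (R q)
      * (edgeDensity W (R p) (R q) - edgeDensity W (P (π p)) (P (π q))) ^ 2 := by
  classical
  have hvol : ∀ i, ∑ p with π p = i, volume.real (R p) = volume.real (P i) := fun i => by
    rw [← hP.biUnion_fiber hR hπ i, measureReal_biUnion_finset
      (hR.2.2.1.set_pairwise _) (fun p _ => hR.measurableSet p) (fun p _ => hR.volume_ne_top p)]
  have hmass : ∀ i j, ∑ p with π p = i, ∑ q with π q = j,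
      volume.real (R p) * volume.real (R q) * edgeDensity W (R p) (R q)
        = volume.real (P i) * volume.real (P j) * edgeDensity W (P i) (P j) := fun i j => by
    rw [mul_edgeDensity (hP.volume_ne_top i) (hP.volume_ne_top j), ← hP.biUnion_fiber hR hπ i,
      ← hP.biUnion_fiber hR hπ j,
      edgeMass_biUnion hW hR.measurableSet hR.2.2.1 hR.volume_ne_top]
    simp only [mul_edgeDensity (hR.volume_ne_top _) (hR.volume_ne_top _)]
  rw [sum_mul_sub_sq_eq π _ _ hvol _ _ hmass]
  rfl

end refinement

section increment

variable {ι κ : Type*} [Fintype ι] [Fintype κ] {P : ι → Set ℝ} {Q S T : κ → Set ℝ}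

lemma sum_abs_edgeMass_le_cell (hW : IsKernel W) (hP : IsPartition P) (hQ : IsPartition Q)
    (hST : ∀ j, MeasurableSet (S j) ∧ MeasurableSet (T j) ∧ S j ⊆ Q j ∧ T j ⊆ Q j) :
    ∑ j, ∑ l, |edgeMass (fun x y => W x y - avgP P W x y) (S j) (T l)|
      ≤ ∑ p, ∑ q, volume.real (cell P Q S T p) * volume.real (cell P Q S T q)
        * |edgeDensity W (cell P Q S T p) (cell P Q S T q) - edgeDensity W (P p.1) (P q.1)| := by
  classical
  have hR := isPartition_cell hP hQ (fun j => (hST j).1) (fun j => (hST j).2.1)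
  set F : ι × κ × Bool × Bool → ι × κ × Bool × Bool → ℝ := fun p q =>
    volume.real (cell P Q S T p) * volume.real (cell P Q S T q)
      * |edgeDensity W (cell P Q S T p) (cell P Q S T q) - edgeDensity W (P p.1) (P q.1)|
  have hF : ∀ p q, 0 ≤ F p q := fun p q => by positivity
  set s : κ → Finset (ι × κ × Bool × Bool) := fun j =>
    Finset.univ.filter fun p => p.2.1 = j ∧ p.2.2.1
  set t : κ → Finset (ι × κ × Bool × Bool) := fun j =>
    Finset.univ.filter fun p => p.2.1 = j ∧ p.2.2.2
  have hpiece : ∀ j l, |edgeMass (fun x y => W x y - avgP P W x y) (S j) (T l)|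
      ≤ ∑ p ∈ s j, ∑ q ∈ t l, F p q := fun j l => by
    rw [← biUnion_cell_left hP hQ (fun j => (hST j).2.2.1) j,
      ← biUnion_cell_right hP hQ (fun j => (hST j).2.2.2) l,
      edgeMass_biUnion (hW.sub (isKernel_avgP hP.measurableSet)) hR.measurableSet hR.2.2.1
        hR.volume_ne_top]
    refine (Finset.abs_sum_le_sum_abs _ _).trans (Finset.sum_le_sum fun p _ =>
      (Finset.abs_sum_le_sum_abs _ _).trans (Finset.sum_le_sum fun q _ => ?_))
    rw [edgeMass_sub_avgP_of_subset hW hP hR cell_subset_fst, abs_mul,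
      abs_of_nonneg (by positivity)]
  have hs : ∀ j, ∀ p ∈ s j, p.2.1 = j := fun j p hp => (Finset.mem_filter.mp hp).2.1
  have ht : ∀ l, ∀ q ∈ t l, q.2.1 = l := fun l q hq => (Finset.mem_filter.mp hq).2.1
  calc ∑ j, ∑ l, |edgeMass (fun x y => W x y - avgP P W x y) (S j) (T l)|
      ≤ ∑ j, ∑ l, ∑ p ∈ s j, ∑ q ∈ t l, F p q :=
        Finset.sum_le_sum fun j _ => Finset.sum_le_sum fun l _ => hpiece j l
    _ = ∑ j, ∑ p ∈ s j, ∑ l, ∑ q ∈ t l, F p q :=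
        Finset.sum_congr rfl fun j _ => Finset.sum_comm
    _ ≤ ∑ j, ∑ p ∈ s j, ∑ q, F p q :=
        Finset.sum_le_sum fun j _ => Finset.sum_le_sum fun p _ =>
          sum_sum_le_of_subset_fiber (·.2.1) t ht (F p) (hF p)
    _ ≤ ∑ p, ∑ q, F p q :=
        sum_sum_le_of_subset_fiber (·.2.1) s hs _ fun p => Finset.sum_nonneg fun q _ => hF p q

lemma energy_add_sq_lt_energy_cell (hW : IsKernel W) (hP : IsPartition P) (hQ : IsPartition Q)
    (hST : ∀ j, MeasurableSet (S j) ∧ MeasurableSet (T j) ∧ S j ⊆ Q j ∧ T j ⊆ Q j)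
    {ε : ℝ} (hε : 0 ≤ ε)
    (h : ε < ∑ j, ∑ l, |edgeMass (fun x y => W x y - avgP P W x y) (S j) (T l)|) :
    energy W P + ε ^ 2 < energy W (cell P Q S T) := by
  have hR := isPartition_cell hP hQ (fun j => (hST j).1) (fun j => (hST j).2.1)
  have hL1 := h.trans_le (sum_abs_edgeMass_le_cell hW hP hQ hST)
  have hCS := sq_sum_mul_abs_le _ (fun _ => measureReal_nonneg) hR.sum_measureReal_s10
    fun p q => edgeDensity W (cell P Q S T p) (cell P Q S T q) - edgeDensity W (P p.1) (P q.1)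
  have hgain := energy_sub_energy_of_subset hW hP hR cell_subset_fst
  linarith [pow_lt_pow_left₀ hL1 hε two_ne_zero]

end increment

def IsIntermediateRegular (W : ℝ → ℝ → ℝ) (ε : ℝ) {m : ℕ} (P : Fin m → Set ℝ) : Prop :=
  ∀ t ≤ m, ∀ Q : Fin t → Set ℝ, IsPartition Q →
    cutPNorm Q (fun x y => W x y - avgP P W x y) ≤ ε

lemma exists_lt_sum_of_lt_cutPNorm {ι : Type*} [Fintype ι] {Q : ι → Set ℝ} {U : ℝ → ℝ → ℝ}
    {ε : ℝ} (hε : 0 ≤ ε) (h : ε < cutPNorm Q U) :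
    ∃ S T : ι → Set ℝ,
      (∀ i, MeasurableSet (S i) ∧ MeasurableSet (T i) ∧ S i ⊆ Q i ∧ T i ⊆ Q i) ∧
      ε < ∑ i, ∑ j, |edgeMass U (S i) (T j)| := by
  by_contra! hle
  exact h.not_ge (Real.sSup_le (fun r ⟨S, T, hST, hr⟩ => hr ▸ hle S T hST) hε)

lemma exists_energy_increment (hW : IsKernel W) {ε : ℝ} (hε : 0 ≤ ε) {m : ℕ}
    {P : Fin m → Set ℝ} (hP : IsPartition P) (hreg : ¬ IsIntermediateRegular W ε P) :
    ∃ n ≤ 4 * m ^ 2, ∃ P' : Fin n → Set ℝ,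
      IsPartition P' ∧ energy W P + ε ^ 2 < energy W P' := by
  simp only [IsIntermediateRegular, not_forall, not_le] at hreg
  obtain ⟨t, ht, Q, hQ, hlt⟩ := hreg
  obtain ⟨S, T, hST, hsum⟩ := exists_lt_sum_of_lt_cutPNorm hε hlt
  let e := (Fintype.equivFin (Fin m × Fin t × Bool × Bool)).symm
  refine ⟨_, ?_, cell P Q S T ∘ e,
    (isPartition_cell hP hQ (fun j => (hST j).1) (fun j => (hST j).2.1)).comp_equiv e, ?_⟩
  · simp only [Fintype.card_prod, Fintype.card_fin, Fintype.card_bool]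
    nlinarith
  · rw [energy_comp_equiv]
    exact energy_add_sq_lt_energy_cell hW hP hQ hST hε hsum

lemma exists_isIntermediateRegular (hW : IsKernel W) (hb : ∀ x y, |W x y| ≤ 1) {ε : ℝ}
    (hε : 0 ≤ ε) (k : ℕ) {m : ℕ} {P : Fin m → Set ℝ} (hP : IsPartition P)
    (hk : 1 ≤ energy W P + k * ε ^ 2) :
    ∃ m' ≤ (fun n => 4 * n ^ 2)^[k] m, ∃ P' : Fin m' → Set ℝ,
      IsPartition P' ∧ IsIntermediateRegular W ε P' := by
  induction k generalizing m with
  | zero =>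
    refine ⟨m, le_rfl, P, hP, ?_⟩
    by_contra hreg
    obtain ⟨n, -, P', hP', hgain⟩ := exists_energy_increment hW hε hP hreg
    simp only [CharP.cast_eq_zero, zero_mul, add_zero] at hk
    linarith [energy_le_one hb hP', sq_nonneg ε]
  | succ k ih =>
    by_cases hreg : IsIntermediateRegular W ε P
    · exact ⟨m, Function.id_le_iterate_of_id_le (fun n => show n ≤ 4 * n ^ 2 by nlinarith) _ m,
        P, hP, hreg⟩
    obtain ⟨n, hn, P', hP', hgain⟩ := exists_energy_increment hW hε hP hreg
    obtain ⟨m', hm', hreg'⟩ := ih hP' (by push_cast at hk; linarith)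
    refine ⟨m', hm'.trans ?_, hreg'⟩
    rw [Function.iterate_succ_apply]
    exact Monotone.iterate (fun a b hab => show 4 * a ^ 2 ≤ 4 * b ^ 2 by gcongr) k hn

lemma iterate_four_mul_sq_one (k : ℕ) : (fun n => 4 * n ^ 2)^[k] 1 = 4 ^ (2 ^ k - 1) := by
  induction k with
  | zero => rfl
  | succ k ih =>
    rw [Function.iterate_succ_apply', ih, ← pow_mul, ← pow_succ']
    congr 1
    rw [pow_succ]
    have := Nat.one_le_two_pow (n := k)
    omega

lemma four_pow_two_pow_ceil_le {ε : ℝ} (hε : 0 < ε) :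
    ((4 ^ (2 ^ ⌈1 / ε ^ 2⌉₊ - 1) : ℕ) : ℝ) ≤ (16 : ℝ) ^ ((2 : ℝ) ^ (1 / ε ^ 2)) / 4 := by
  have h2K : 1 ≤ 2 ^ ⌈1 / ε ^ 2⌉₊ := Nat.one_le_two_pow
  have hceil : (⌈1 / ε ^ 2⌉₊ : ℝ) ≤ 1 / ε ^ 2 + 1 :=
    (Nat.ceil_lt_add_one (by positivity)).le
  have hexp : (2 : ℝ) ^ (⌈1 / ε ^ 2⌉₊ : ℝ) ≤ 2 * (2 : ℝ) ^ (1 / ε ^ 2) := by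
    calc (2 : ℝ) ^ (⌈1 / ε ^ 2⌉₊ : ℝ) ≤ (2 : ℝ) ^ (1 / ε ^ 2 + 1) :=
          Real.rpow_le_rpow_of_exponent_le (by norm_num) hceil
      _ = 2 * (2 : ℝ) ^ (1 / ε ^ 2) := by rw [Real.rpow_add_one two_ne_zero, mul_comm]
  have h16 : (16 : ℝ) ^ ((2 : ℝ) ^ (1 / ε ^ 2)) / 4
      = (4 : ℝ) ^ (2 * (2 : ℝ) ^ (1 / ε ^ 2) - 1) := by
    rw [Real.rpow_sub (by norm_num), Real.rpow_one, Real.rpow_mul (by norm_num)]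
    norm_num
  rw [h16, Nat.cast_pow, Nat.cast_ofNat, ← Real.rpow_natCast]
  refine Real.rpow_le_rpow_of_exponent_le (by norm_num) ?_
  rw [Nat.cast_sub h2K, Nat.cast_pow, Nat.cast_ofNat, Nat.cast_one, ← Real.rpow_natCast]
  linarith

end Graphon

theorem intermediate_regularity_graphon_general (ε : ℝ) (hε : 0 < ε) (W : ℝ → ℝ → ℝ)
    (hmeas : Measurable (Function.uncurry W))
    (hrange : ∀ x y, W x y ∈ Set.Icc (0:ℝ) 1) :
    ∃ (m : ℕ) (P : Fin m → Set ℝ), IsPartition P ∧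
      (m : ℝ) ≤ (16:ℝ) ^ ((2:ℝ) ^ (1 / ε ^ 2)) / 4 ∧
      ∀ (t : ℕ), t ≤ m → ∀ Q : Fin t → Set ℝ, IsPartition Q →
        cutPNorm Q (fun x y => W x y - avgP P W x y) ≤ ε := by
  have hb : ∀ x y, |W x y| ≤ 1 := fun x y =>
    abs_le.mpr ⟨by linarith [(hrange x y).1], (hrange x y).2⟩
  have hK : 1 ≤ Graphon.energy W (fun _ : Fin 1 => I01) + ⌈1 / ε ^ 2⌉₊ * ε ^ 2 := by
    have := (div_le_iff₀ (by positivity)).mp (Nat.le_ceil (1 / ε ^ 2))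
    linarith [Graphon.energy_nonneg (W := W) (P := fun _ : Fin 1 => I01)]
  obtain ⟨m, hm, P, hP, hreg⟩ := Graphon.exists_isIntermediateRegular ⟨hmeas, 1, hb⟩ hb
    hε.le ⌈1 / ε ^ 2⌉₊ isPartition_unit hK
  rw [Graphon.iterate_four_mul_sq_one] at hm
  exact ⟨m, P, hP, (Nat.cast_le.mpr hm).trans (Graphon.four_pow_two_pow_ceil_le hε), hreg⟩

theorem intermediate_regularity_graphon (ε : ℝ) (hε : 0 < ε) (W : ℝ → ℝ → ℝ)
    (hmeas : Measurable (Function.uncurry W))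
    (hsymm : ∀ x y, W x y = W y x)
    (hrange : ∀ x y, W x y ∈ Set.Icc (0:ℝ) 1) :
    ∃ (m : ℕ) (P : Fin m → Set ℝ), IsPartition P ∧
      (m : ℝ) ≤ (16:ℝ) ^ ((2:ℝ) ^ (1 / ε ^ 2)) / 4 ∧
      ∀ (t : ℕ), t ≤ m → ∀ Q : Fin t → Set ℝ, IsPartition Q →
        cutPNorm Q (fun x y => W x y - avgP P W x y) ≤ ε :=
  intermediate_regularity_graphon_general ε hε W hmeas hrange
end
end
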